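/- arXiv:2404.05045 — 5 statements merged into one kernel-verified Lean document; each statement's English description precedes it below -/
import Mathlib

section
/- Let T be a weighted tree on n ≥ 2 vertices with tree metric d_T, and let K ⊆ V(T) be a nonempty set of terminals. Then there exists a non-Steiner tree cover of the finite metric space (K, d_T) of size at most ⌈log₂ n⌉ + 1 and stretch 2; that is, a collection of at most ⌈log₂ n⌉ + 1 dominating trees T_1,…,T_β on K such that for all x,y ∈ K, min_{1≤i≤β} d_{T_i}(x,y) ≤ 2·d_T(x,y). -/
open scoped ENNReal

/-- The total length of a walk with respect to an edge-length function. -/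
noncomputable def walkLen {V : Type*} {G : SimpleGraph V} {x y : V}
    (len : V → V → ℝ≥0∞) (p : G.Walk x y) : ℝ≥0∞ :=
  (p.darts.map (fun d => len d.toProd.1 d.toProd.2)).sum

/-- Walk-distance in a graph with edge lengths: the infimum over walks of the total
length (`∞` if no walk exists). -/
noncomputable def gdist {V : Type*} (G : SimpleGraph V) (len : V → V → ℝ≥0∞)
    (x y : V) : ℝ≥0∞ :=
  ⨅ p : G.Walk x y, walkLen len p

/-- A weighted tree: a connected acyclic simple graph together with positive
(finite) real lengths on its edges. -/
structure WeightedTree (V : Type*) where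
  graph : SimpleGraph V
  isTree : graph.IsTree
  len : V → V → ℝ≥0∞
  len_symm : ∀ x y, len x y = len y x
  len_pos : ∀ ⦃x y⦄, graph.Adj x y → 0 < len x y
  len_ne_top : ∀ ⦃x y⦄, graph.Adj x y → len x y ≠ ⊤

/-- The tree metric of a weighted tree. -/
noncomputable def WeightedTree.dist {V : Type*} (T : WeightedTree V) (x y : V) : ℝ≥0∞ :=
  gdist T.graph T.len x y

/-- A non-Steiner tree cover of `(K, d)` with stretch `α`: a list of dominating
trees on `K` such that each pair has its distance preserved within factor `α`
in at least one of the trees. -/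
def IsNonSteinerTreeCover {K : Type*} (d : K → K → ℝ) (α : ℝ)
    (Ts : List (WeightedTree K)) : Prop :=
  (∀ T ∈ Ts, ∀ x y : K, ENNReal.ofReal (d x y) ≤ T.dist x y) ∧
  (∀ x y : K, ∃ T ∈ Ts, T.dist x y ≤ ENNReal.ofReal (α * d x y))

namespace NST

open SimpleGraph

attribute [local instance] Classical.propDecidable

variable {V : Type*}

section walklen

variable {G : SimpleGraph V} (len : V → V → ℝ≥0∞)

lemma walkLen_nil {x : V} : walkLen len (SimpleGraph.Walk.nil : G.Walk x x) = 0 := by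
  simp [walkLen]

lemma walkLen_cons {x y z : V} (h : G.Adj x y) (p : G.Walk y z) :
    walkLen len (SimpleGraph.Walk.cons h p) = len x y + walkLen len p := by
  simp [walkLen]

lemma walkLen_append {x y z : V} (p : G.Walk x y) (q : G.Walk y z) :
    walkLen len (p.append q) = walkLen len p + walkLen len q := by
  simp [walkLen, SimpleGraph.Walk.darts_append]

lemma walkLen_reverse (hsym : ∀ a b, len a b = len b a) {x y : V} (p : G.Walk x y) :
    walkLen len p.reverse = walkLen len p := by
  rw [walkLen, walkLen, SimpleGraph.Walk.darts_reverse, List.map_reverse, List.sum_reverse,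
    List.map_map]
  refine congrArg _ (List.map_congr_left fun d _ => ?_)
  simp [hsym d.toProd.1 d.toProd.2]

lemma gdist_le_walkLen {x y : V} (p : G.Walk x y) : gdist G len x y ≤ walkLen len p :=
  iInf_le _ _

lemma gdist_self (x : V) : gdist G len x x = 0 :=
  le_antisymm ((gdist_le_walkLen len .nil).trans_eq (walkLen_nil len)) zero_le

lemma gdist_triangle (x y z : V) :
    gdist G len x z ≤ gdist G len x y + gdist G len y z := by
  have h : gdist G len x y + gdist G len y z
      = ⨅ (p : G.Walk x y) (q : G.Walk y z), (walkLen len p + walkLen len q) := by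
    rw [gdist, gdist, ENNReal.iInf_add]
    exact iInf_congr fun p => ENNReal.add_iInf
  rw [h]
  exact le_iInf fun p => le_iInf fun q =>
    iInf_le_of_le (p.append q) (walkLen_append len p q).le

lemma gdist_symm (hsym : ∀ a b, len a b = len b a) (x y : V) :
    gdist G len x y = gdist G len y x := by
  have h : ∀ a b : V, gdist G len a b ≤ gdist G len b a := fun a b =>
    le_iInf fun p => iInf_le_of_le p.reverse (walkLen_reverse len hsym p).le
  exact le_antisymm (h x y) (h y x)

lemma le_gdist_of_lipschitz (D : V → V → ℝ≥0∞) (hD0 : ∀ x, D x x = 0)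
    (htri : ∀ x y z, D x z ≤ D x y + D y z)
    (hedge : ∀ ⦃a b⦄, G.Adj a b → D a b ≤ len a b) (x y : V) :
    D x y ≤ gdist G len x y := by
  refine le_iInf fun p => ?_
  induction p with
  | nil => simp [walkLen_nil, hD0]
  | cons h p ih =>
    rw [walkLen_cons]
    exact (htri _ _ _).trans (add_le_add (hedge h) ih)

lemma gdist_anti {G' : SimpleGraph V} {len' : V → V → ℝ≥0∞}
    (h : ∀ a b, G.Adj a b → G'.Adj a b ∧ len' a b = len a b) (x y : V) :
    gdist G' len' x y ≤ gdist G len x y := by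
  refine le_iInf fun p => ?_
  obtain ⟨q, hq⟩ : ∃ q : G'.Walk x y, walkLen len' q = walkLen len p := by
    induction p with
    | nil => exact ⟨.nil, by rw [walkLen_nil, walkLen_nil]⟩
    | cons hadj p ih =>
      obtain ⟨q, hq⟩ := ih
      exact ⟨.cons (h _ _ hadj).1 q, by rw [walkLen_cons, walkLen_cons, hq, (h _ _ hadj).2]⟩
  exact hq ▸ gdist_le_walkLen len' q

end walklen


section ambient

variable (T : WeightedTree V)

lemma dist_self (x : V) : T.dist x x = 0 := gdist_self T.len x

lemma dist_symm (x y : V) : T.dist x y = T.dist y x := gdist_symm T.len T.len_symm x y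

lemma dist_triangle (x y z : V) : T.dist x z ≤ T.dist x y + T.dist y z :=
  gdist_triangle T.len x y z

lemma walkLen_ne_top {x y : V} (p : T.graph.Walk x y) : walkLen T.len p ≠ ⊤ := by
  induction p with
  | nil => rw [walkLen_nil]; exact ENNReal.zero_ne_top
  | cons h p ih =>
    rw [walkLen_cons]
    exact ENNReal.add_ne_top.2 ⟨T.len_ne_top h, ih⟩

lemma dist_ne_top (x y : V) : T.dist x y ≠ ⊤ := by
  obtain ⟨p⟩ := T.isTree.isConnected.preconnected x y
  exact ne_top_of_le_ne_top (walkLen_ne_top T p) (gdist_le_walkLen T.len p)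

lemma dist_pos [Fintype V] {x y : V} (hxy : x ≠ y) : 0 < T.dist x y := by
  classical
  by_cases hS : ((Finset.univ ×ˢ Finset.univ).filter
      fun p : V × V => T.graph.Adj p.1 p.2).Nonempty
  · have hε : 0 < (((Finset.univ ×ˢ Finset.univ).filter
        fun p : V × V => T.graph.Adj p.1 p.2).inf' hS fun p => T.len p.1 p.2) := by
      rw [Finset.lt_inf'_iff]
      intro p hp
      exact T.len_pos (Finset.mem_filter.1 hp).2
    refine hε.trans_le (le_iInf fun p => ?_)
    cases p with
    | nil => exact absurd rfl hxy
    | @cons _ b _ h q =>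
      rw [walkLen_cons]
      have hmem : ((x, b) : V × V) ∈ (Finset.univ ×ˢ Finset.univ).filter
          (fun p : V × V => T.graph.Adj p.1 p.2) := by
        simp only [Finset.mem_filter, Finset.mem_product, Finset.mem_univ, true_and, and_true]
        exact h
      exact le_trans (Finset.inf'_le _ hmem) le_self_add
  · have he : IsEmpty (T.graph.Walk x y) := by
      constructor; intro p
      cases p with
      | nil => exact hxy rfl
      | @cons _ b _ h q =>
        exact hS ⟨(x, b), by
          simp only [Finset.mem_filter, Finset.mem_product, Finset.mem_univ, true_and, and_true]
          exact h⟩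
    show (0 : ℝ≥0∞) < ⨅ p : T.graph.Walk x y, walkLen T.len p
    rw [iInf_of_empty]
    exact ENNReal.zero_lt_top

lemma dist_add_of_sep {x y c : V} (h : ∀ p : T.graph.Walk x y, c ∈ p.support) :
    T.dist x y = T.dist x c + T.dist c y := by
  refine le_antisymm (dist_triangle T x c y) (le_iInf fun p => ?_)
  have hc := h p
  have hsplit := congrArg (walkLen T.len) (SimpleGraph.Walk.take_spec p hc)
  rw [walkLen_append] at hsplit
  rw [← hsplit]
  exact add_le_add (gdist_le_walkLen T.len _) (gdist_le_walkLen T.len _)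

/-- `SRel T c x y` : there is a walk from `x` to `y` avoiding `c`. -/
def SRel (c x y : V) : Prop := ∃ p : T.graph.Walk x y, c ∉ p.support

lemma SRel.ne_left {T : WeightedTree V} {c x y : V} (h : SRel T c x y) : x ≠ c := by
  obtain ⟨p, hp⟩ := h
  exact fun e => hp (e ▸ p.start_mem_support)

lemma SRel.ne_right {T : WeightedTree V} {c x y : V} (h : SRel T c x y) : y ≠ c := by
  obtain ⟨p, hp⟩ := h
  exact fun e => hp (e ▸ p.end_mem_support)

lemma srel_refl {c x : V} (h : x ≠ c) : SRel T c x x :=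
  ⟨.nil, by simp [Ne.symm h]⟩

lemma SRel.symm {T : WeightedTree V} {c x y : V} (h : SRel T c x y) : SRel T c y x := by
  obtain ⟨p, hp⟩ := h
  exact ⟨p.reverse, by rwa [SimpleGraph.Walk.support_reverse, List.mem_reverse]⟩

lemma SRel.trans {T : WeightedTree V} {c x y z : V} (h : SRel T c x y) (h' : SRel T c y z) : SRel T c x z := by
  obtain ⟨p, hp⟩ := h
  obtain ⟨q, hq⟩ := h'
  exact ⟨p.append q, by rw [SimpleGraph.Walk.mem_support_append_iff]; tauto⟩

lemma dist_split {x y c : V} (h : ¬ SRel T c x y) :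
    T.dist x y = T.dist x c + T.dist c y := by
  refine dist_add_of_sep T fun p => ?_
  by_contra hc
  exact h ⟨p, hc⟩

/-- The unique path between two vertices. -/
noncomputable def thePath (x y : V) : T.graph.Walk x y :=
  (T.isTree.existsUnique_path x y).exists.choose

lemma thePath_isPath (x y : V) : (thePath T x y).IsPath :=
  (T.isTree.existsUnique_path x y).exists.choose_spec

lemma thePath_unique {x y : V} {p : T.graph.Walk x y} (hp : p.IsPath) : p = thePath T x y :=
  (T.isTree.existsUnique_path x y).unique hp (thePath_isPath T x y)

/-- Hop distance. -/
noncomputable def hop (x y : V) : ℕ := (thePath T x y).length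

lemma hop_le {x y : V} (w : T.graph.Walk x y) : hop T x y ≤ w.length := by
  rw [hop, ← thePath_unique T w.bypass_isPath]
  exact w.length_bypass_le

lemma exists_centroid [Fintype V] [Nonempty V] (K' : Finset V) :
    ∃ c : V, ∀ v ∈ K', v ≠ c → 2 * (K'.filter (SRel T c v)).card ≤ K'.card := by
  classical
  obtain ⟨c, -, hmin⟩ := Finset.exists_min_image Finset.univ
    (fun z => ∑ y ∈ K', hop T z y) Finset.univ_nonempty
  refine ⟨c, fun v hvK hvc => ?_⟩
  by_contra hbig
  push_neg at hbig
  set C := K'.filter (SRel T c v) with hCdef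
  -- decompose the path from c to v
  have hvc' : c ≠ v := Ne.symm hvc
  obtain ⟨b, h, q, hq⟩ := SimpleGraph.Walk.exists_eq_cons_of_ne hvc' (thePath T c v)
  have hpath : (SimpleGraph.Walk.cons h q).IsPath := hq ▸ thePath_isPath T c v
  rw [SimpleGraph.Walk.cons_isPath_iff] at hpath
  -- key1 : for y in C, hop c y = hop b y + 1
  have key1 : ∀ y ∈ C, hop T c y = hop T b y + 1 := by
    intro y hy
    have hsrel : SRel T c v y := (Finset.mem_filter.1 hy).2
    obtain ⟨r, hr⟩ := hsrel
    have hqr : c ∉ (q.append r).support := by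
      rw [SimpleGraph.Walk.mem_support_append_iff]
      tauto
    set w2 := (q.append r).bypass with hw2
    have hw2path : w2.IsPath := SimpleGraph.Walk.bypass_isPath _
    have hw2c : c ∉ w2.support := fun hc =>
      hqr (SimpleGraph.Walk.support_bypass_subset _ hc)
    have hcons : (SimpleGraph.Walk.cons h w2).IsPath :=
      (SimpleGraph.Walk.cons_isPath_iff _ _).2 ⟨hw2path, hw2c⟩
    have e1 : hop T c y = (SimpleGraph.Walk.cons h w2).length := by
      rw [hop, ← thePath_unique T hcons]
    have e2 : hop T b y = w2.length := by
      rw [hop, ← thePath_unique T hw2path]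
    rw [e1, e2, SimpleGraph.Walk.length_cons]
  -- key2 : hop b y ≤ hop c y + 1
  have key2 : ∀ y : V, hop T b y ≤ hop T c y + 1 := by
    intro y
    have := hop_le T (SimpleGraph.Walk.cons h.symm (thePath T c y))
    rwa [SimpleGraph.Walk.length_cons, hop] at this
  -- sum comparison
  have hsplitc : ∑ y ∈ K', hop T c y
      = ∑ y ∈ C, hop T c y + ∑ y ∈ K'.filter (fun y => ¬ SRel T c v y), hop T c y := by
    rw [hCdef, Finset.sum_filter_add_sum_filter_not]
  have hsplitb : ∑ y ∈ K', hop T b y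
      = ∑ y ∈ C, hop T b y + ∑ y ∈ K'.filter (fun y => ¬ SRel T c v y), hop T b y := by
    rw [hCdef, Finset.sum_filter_add_sum_filter_not]
  have hC1 : ∑ y ∈ C, hop T c y = ∑ y ∈ C, hop T b y + C.card := by
    rw [Finset.card_eq_sum_ones, ← Finset.sum_add_distrib]
    exact Finset.sum_congr rfl key1
  have hC2 : ∑ y ∈ K'.filter (fun y => ¬ SRel T c v y), hop T b y
      ≤ ∑ y ∈ K'.filter (fun y => ¬ SRel T c v y), hop T c y
        + (K'.filter (fun y => ¬ SRel T c v y)).card := by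
    rw [Finset.card_eq_sum_ones, ← Finset.sum_add_distrib]
    exact Finset.sum_le_sum fun y _ => key2 y
  have hmin' := hmin b (Finset.mem_univ b)
  have hcards : C.card + (K'.filter (fun y => ¬ SRel T c v y)).card = K'.card := by
    rw [hCdef, Finset.card_filter_add_card_filter_not]
  omega

end ambient


section ptree

/-- Graph generated by a parent function. -/
def pGraph {α : Type*} (p : α → α) : SimpleGraph α where
  Adj a b := a ≠ b ∧ (p a = b ∨ p b = a)
  symm := ⟨by
    rintro a b ⟨h1, h2⟩
    exact ⟨h1.symm, h2.symm⟩⟩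
  loopless := ⟨fun a h => h.1 rfl⟩

lemma pGraph_adj {α : Type*} (p : α → α) {a b : α} :
    (pGraph p).Adj a b ↔ a ≠ b ∧ (p a = b ∨ p b = a) := Iff.rfl

lemma pGraph_isTree {α : Type*} (par : α → α) (rk : α → ℕ) (r : α)
    (hroot : ∀ x, par x = x → x = r) (hrk : ∀ x, par x ≠ x → rk (par x) < rk x) :
    (pGraph par).IsTree := by
  classical
  have hreach : ∀ n x, rk x ≤ n → (pGraph par).Reachable x r := by
    intro n
    induction n with
    | zero =>
      intro x hx
      by_cases h : par x = x
      · rw [hroot x h]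
      · exact absurd (lt_of_lt_of_le (hrk x h) hx) (Nat.not_lt_zero _)
    | succ n ih =>
      intro x hx
      by_cases h : par x = x
      · rw [hroot x h]
      · have hadj : (pGraph par).Adj x (par x) := ⟨fun e => h e.symm, Or.inl rfl⟩
        exact hadj.reachable.trans (ih (par x) (by have := hrk x h; omega))
  constructor
  · rw [SimpleGraph.connected_iff]
    exact ⟨fun x y => (hreach (rk x) x le_rfl).trans (hreach (rk y) y le_rfl).symm, ⟨r⟩⟩
  · intro v cwalk hcyc
    obtain ⟨m, hmmem, hmax⟩ := Finset.exists_max_image cwalk.support.toFinset rk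
      ⟨v, List.mem_toFinset.2 cwalk.start_mem_support⟩
    rw [List.mem_toFinset] at hmmem
    have hmax' : ∀ z ∈ cwalk.support, rk z ≤ rk m := fun z hz =>
      hmax z (List.mem_toFinset.2 hz)
    obtain ⟨q, hq, hsupp⟩ : ∃ q : (pGraph par).Walk m m, q.IsCycle ∧
        ∀ z ∈ q.support, rk z ≤ rk m := by
      refine ⟨cwalk.rotate m hmmem, hcyc.rotate hmmem, fun z hz => ?_⟩
      rw [SimpleGraph.Walk.support_eq_cons] at hz
      rcases List.mem_cons.1 hz with hz | hz
      · subst hz; exact le_rfl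
      · have hz' : z ∈ cwalk.support.tail :=
          (SimpleGraph.Walk.support_rotate cwalk m hmmem).mem_iff.1 hz
        exact hmax' z (List.mem_of_mem_tail hz')
    cases q with
    | nil => simpa using hq.three_le_length
    | @cons _ b _ h1 q1 =>
      have hb_supp : b ∈ (SimpleGraph.Walk.cons h1 q1).support := by
        rw [SimpleGraph.Walk.support_cons]
        exact List.mem_cons_of_mem _ q1.start_mem_support
      have hparmb : par m = b := by
        rcases h1.2 with h | h
        · exact h
        · exfalso
          have hne : par b ≠ b := by rw [h]; exact h1.ne
          have h2 := hrk b hne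
          rw [h] at h2
          have := hsupp b hb_supp
          omega
      have hq1len : 2 ≤ q1.length := by
        have := hq.three_le_length
        rw [SimpleGraph.Walk.length_cons] at this
        omega
      obtain ⟨z, h2, q2, hrev⟩ := SimpleGraph.Walk.exists_eq_cons_of_ne h1.ne q1.reverse
      have hz_supp : z ∈ (SimpleGraph.Walk.cons h1 q1).support := by
        have hz1 : z ∈ q1.reverse.support := by
          rw [hrev, SimpleGraph.Walk.support_cons]
          exact List.mem_cons_of_mem _ q2.start_mem_support
        rw [SimpleGraph.Walk.support_reverse, List.mem_reverse] at hz1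
        rw [SimpleGraph.Walk.support_cons]
        exact List.mem_cons_of_mem _ hz1
      have hparmz : par m = z := by
        rcases h2.2 with h | h
        · exact h
        · exfalso
          have hne : par z ≠ z := by rw [h]; exact h2.ne
          have h3 := hrk z hne
          rw [h] at h3
          have := hsupp z hz_supp
          omega
      have hzb : z = b := by rw [← hparmz, hparmb]
      have hedge : s(m, z) ∈ q1.edges := by
        have he : s(m, z) ∈ q1.reverse.edges := by
          rw [hrev, SimpleGraph.Walk.edges_cons]
          exact List.mem_cons_self
        rwa [SimpleGraph.Walk.edges_reverse, List.mem_reverse] at he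
      have hnodup : ((SimpleGraph.Walk.cons h1 q1).edges).Nodup := hq.edges_nodup
      rw [SimpleGraph.Walk.edges_cons] at hnodup
      rw [hzb] at hedge
      exact (List.nodup_cons.1 hnodup).1 hedge

end ptree

section vtree

/-- A rooted tree structure given by a parent function with decreasing rank. -/
structure VTree (V : Type*) where
  root : V
  parent : V → V
  w : V → ℝ≥0∞
  rank : V → ℕ
  parent_root : parent root = root
  rank_lt : ∀ x, parent x ≠ x → rank (parent x) < rank x

lemma VTree.not_double {t : VTree V} {a b : V} (h1 : t.parent a = b) (h2 : t.parent b = a)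
    (hab : a ≠ b) : False := by
  have ha : t.parent a ≠ a := by rw [h1]; exact Ne.symm hab
  have hb : t.parent b ≠ b := by rw [h2]; exact hab
  have c1 := t.rank_lt a ha
  have c2 := t.rank_lt b hb
  rw [h1] at c1
  rw [h2] at c2
  omega

noncomputable def lenOf (t : VTree V) : V → V → ℝ≥0∞ := fun a b =>
  if t.parent a = b then t.w a else if t.parent b = a then t.w b else 1

lemma lenOf_symm (t : VTree V) : ∀ a b, lenOf t a b = lenOf t b a := by
  intro a b
  unfold lenOf
  by_cases h1 : t.parent a = b
  · by_cases h2 : t.parent b = a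
    · by_cases hab : a = b
      · subst hab; rfl
      · exact (VTree.not_double h1 h2 hab).elim
    · rw [if_pos h1, if_neg h2, if_pos h1]
  · by_cases h2 : t.parent b = a
    · rw [if_neg h1, if_pos h2, if_pos h2]
    · rw [if_neg h1, if_neg h2, if_neg h2, if_neg h1]

lemma lenOf_eq_left {t : VTree V} {a b : V} (h : t.parent a = b) : lenOf t a b = t.w a := by
  unfold lenOf
  rw [if_pos h]

/-- Walk-distance in the graph generated by a `VTree`. -/
noncomputable def VTree.tdist (t : VTree V) (x y : V) : ℝ≥0∞ :=
  gdist (pGraph t.parent) (lenOf t) x y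

/-- The trivial `VTree` (no edges at all). -/
noncomputable def idT (r : V) : VTree V where
  root := r
  parent := id
  w := fun _ => 1
  rank := fun _ => 0
  parent_root := rfl
  rank_lt := fun _ h => absurd rfl h

/-- The compatibility conditions between a `VTree` on the terminal set `K'` and the
ambient weighted tree `T`. -/
structure IsGood (T : WeightedTree V) (K' : Finset V) (t : VTree V) : Prop where
  root_mem : t.root ∈ K'
  parent_mem : ∀ x ∈ K', t.parent x ∈ K'
  parent_eq : ∀ x ∉ K', t.parent x = x
  eq_root : ∀ x ∈ K', t.parent x = x → x = t.root
  dom : ∀ x, T.dist x (t.parent x) ≤ t.w x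
  pos : ∀ x, t.parent x ≠ x → 0 < t.w x
  fin : ∀ x, t.parent x ≠ x → t.w x ≠ ⊤

noncomputable def starP (K' : Finset V) (k0 : V) : V → V := fun x =>
  if x ∈ K' ∧ x ≠ k0 then k0 else x

lemma starP_of_ne {K' : Finset V} {k0 z : V} (hz : z ∈ K') (hzk : z ≠ k0) :
    starP K' k0 z = k0 := by
  unfold starP
  rw [if_pos ⟨hz, hzk⟩]

lemma starP_self {K' : Finset V} {k0 z : V} (hz : z ∉ K' ∨ z = k0) :
    starP K' k0 z = z := by
  unfold starP
  rcases hz with hz | hz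
  · rw [if_neg (fun hc => hz hc.1)]
  · subst hz
    rw [if_neg (fun hc => hc.2 rfl)]

/-- Star tree on `K'` centered at `k0`. -/
noncomputable def starT (K' : Finset V) (k0 : V) (lw : V → ℝ≥0∞) : VTree V where
  root := k0
  parent := starP K' k0
  w := lw
  rank x := if x = k0 then 0 else 1
  parent_root := starP_self (Or.inr rfl)
  rank_lt := by
    intro x h
    by_cases hx : x ∈ K' ∧ x ≠ k0
    · rw [starP_of_ne hx.1 hx.2]
      rw [if_pos rfl, if_neg hx.2]
      omega
    · rw [starP_self (by tauto)] at h
      exact absurd rfl h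

lemma starT_parent (K' : Finset V) (k0 : V) (lw : V → ℝ≥0∞) :
    (starT K' k0 lw).parent = starP K' k0 := rfl

lemma starT_tdist_le (K' : Finset V) (k0 : V) (lw : V → ℝ≥0∞) {x y : V}
    (hx : x ∈ K') (hy : y ∈ K') :
    (starT K' k0 lw).tdist x y ≤ lw x + lw y := by
  set st := starT K' k0 lw with hst
  by_cases hxy : x = y
  · subst hxy
    rw [VTree.tdist, gdist_self]
    exact zero_le
  have hlen1 : ∀ z ∈ K', z ≠ k0 → lenOf st z k0 = lw z := by
    intro z hz hzk
    show (if st.parent z = k0 then st.w z else if st.parent k0 = z then st.w k0 else 1) = lw z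
    rw [show st.parent z = starP K' k0 z from rfl, starP_of_ne hz hzk, if_pos rfl]
    rfl
  have hlen2 : ∀ z ∈ K', z ≠ k0 → lenOf st k0 z = lw z := by
    intro z hz hzk
    show (if st.parent k0 = z then st.w k0 else if st.parent z = k0 then st.w z else 1) = lw z
    rw [show st.parent k0 = starP K' k0 k0 from rfl, starP_self (Or.inr rfl),
      if_neg (Ne.symm hzk), show st.parent z = starP K' k0 z from rfl, starP_of_ne hz hzk,
      if_pos rfl]
    rfl
  have hadj : ∀ z ∈ K', z ≠ k0 → (pGraph st.parent).Adj z k0 :=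
    fun z hz hzk => ⟨hzk, Or.inl (starP_of_ne hz hzk)⟩
  by_cases hxk : x = k0
  · subst hxk
    have hyk : y ≠ x := Ne.symm hxy
    refine le_trans (gdist_le_walkLen _ (.cons ((hadj y hy hyk).symm) .nil)) ?_
    rw [walkLen_cons, walkLen_nil, add_zero, hlen2 y hy hyk]
    exact le_add_self
  by_cases hyk : y = k0
  · subst hyk
    refine le_trans (gdist_le_walkLen _ (.cons (hadj x hx hxk) .nil)) ?_
    rw [walkLen_cons, walkLen_nil, add_zero, hlen1 x hx hxk]
    exact le_self_add
  · refine le_trans (gdist_le_walkLen _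
      (.cons (hadj x hx hxk) (.cons ((hadj y hy hyk).symm) .nil))) ?_
    rw [walkLen_cons, walkLen_cons, walkLen_nil, add_zero, hlen1 x hx hxk, hlen2 y hy hyk]

noncomputable def mergeP (K' : Finset V) (c r : V) (tr : V → VTree V) : V → V := fun x =>
  if x ∈ K' then
    (if x = c then r else (if (tr x).parent x = x then r else (tr x).parent x)) else x

noncomputable def mergeW (K' : Finset V) (c : V) (tr : V → VTree V) (M : ℝ≥0∞) :
    V → ℝ≥0∞ := fun x =>
  if x ∈ K' then
    (if x = c then M else (if (tr x).parent x = x then M else (tr x).w x)) else 1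

noncomputable def mergeRk (K' : Finset V) (c r : V) (tr : V → VTree V) : V → ℕ := fun x =>
  if x ∈ K' then
    (if x = r then 0 else if x = c then 1 else
      (if (tr x).parent x = x then 1 else (tr x).rank x + 2)) else 0

lemma mergeRk_r (K' : Finset V) (c r : V) (tr : V → VTree V) :
    mergeRk K' c r tr r = 0 := by
  unfold mergeRk
  by_cases hrK : r ∈ K'
  · rw [if_pos hrK, if_pos rfl]
  · rw [if_neg hrK]

/-- Merge the per-class trees `tr` into one tree on `K'` with global root `r`;
`c` is the centroid and `M` a huge length. -/
noncomputable def mergeT (K' : Finset V) (c r : V) (tr : V → VTree V) (M : ℝ≥0∞)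
    (hrc : r ≠ c) (hroot : (tr r).parent r = r)
    (hcons : ∀ x ∈ K', x ≠ c → (tr x).parent x ≠ x →
      ((tr x).parent x ∈ K' ∧ (tr x).parent x ≠ c ∧ tr ((tr x).parent x) = tr x)) :
    VTree V where
  root := r
  parent := mergeP K' c r tr
  w := mergeW K' c tr M
  rank := mergeRk K' c r tr
  parent_root := by
    unfold mergeP
    by_cases hrK : r ∈ K'
    · rw [if_pos hrK, if_neg hrc, if_pos hroot]
    · rw [if_neg hrK]
  rank_lt := by
    intro x hpar
    by_cases hxK : x ∈ K'
    swap
    · unfold mergeP at hpar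
      rw [if_neg hxK] at hpar
      exact absurd rfl hpar
    by_cases hxc : x = c
    · have hp : mergeP K' c r tr x = r := by
        unfold mergeP
        rw [if_pos hxK, if_pos hxc]
      rw [hp, mergeRk_r]
      have hxr : x ≠ r := by rw [hxc]; exact Ne.symm hrc
      unfold mergeRk
      rw [if_pos hxK, if_neg hxr, if_pos hxc]
      omega
    by_cases hpp : (tr x).parent x = x
    · have hp : mergeP K' c r tr x = r := by
        unfold mergeP
        rw [if_pos hxK, if_neg hxc, if_pos hpp]
      rw [hp, mergeRk_r]
      have hxr : x ≠ r := by
        intro e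
        apply hpar
        rw [hp, e]
      unfold mergeRk
      rw [if_pos hxK, if_neg hxr, if_neg hxc, if_pos hpp]
      omega
    · have hp : mergeP K' c r tr x = (tr x).parent x := by
        unfold mergeP
        rw [if_pos hxK, if_neg hxc, if_neg hpp]
      obtain ⟨hpK, hpc, htrp⟩ := hcons x hxK hxc hpp
      have hxr : x ≠ r := by
        intro e
        subst e
        exact hpp hroot
      have hrkx : mergeRk K' c r tr x = (tr x).rank x + 2 := by
        unfold mergeRk
        rw [if_pos hxK, if_neg hxr, if_neg hxc, if_neg hpp]
      rw [hp, hrkx]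
      set p := (tr x).parent x with hpdef
      by_cases hpr : p = r
      · rw [hpr, mergeRk_r]
        omega
      · have hrkp : mergeRk K' c r tr p = if (tr p).parent p = p then 1 else (tr p).rank p + 2 := by
          unfold mergeRk
          rw [if_pos hpK, if_neg hpr, if_neg hpc]
        rw [hrkp, htrp]
        have hlt := (tr x).rank_lt x hpp
        rw [← hpdef] at hlt
        by_cases hq : (tr x).parent p = p
        · rw [if_pos hq]
          omega
        · rw [if_neg hq]
          omega

end vtree


section compat

lemma mergeT_compat (K' C : Finset V) (c r : V) (tr : V → VTree V) (M : ℝ≥0∞)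
    (hrc : r ≠ c) (hroot : (tr r).parent r = r)
    (hcons : ∀ x ∈ K', x ≠ c → (tr x).parent x ≠ x →
      ((tr x).parent x ∈ K' ∧ (tr x).parent x ≠ c ∧ tr ((tr x).parent x) = tr x))
    (t : VTree V) (hC : ∀ a ∈ C, tr a = t) (hCK : C ⊆ K') (hCc : c ∉ C)
    (hout : ∀ a, a ∉ C → t.parent a = a) (hmem : ∀ a ∈ C, t.parent a ∈ C) :
    ∀ a b, (pGraph t.parent).Adj a b →
      (pGraph (mergeT K' c r tr M hrc hroot hcons).parent).Adj a b ∧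
      lenOf (mergeT K' c r tr M hrc hroot hcons) a b = lenOf t a b := by
  have hnc : ∀ a ∈ C, a ≠ c := fun a ha e => hCc (e ▸ ha)
  have key : ∀ a ∈ C, t.parent a ≠ a → mergeP K' c r tr a = t.parent a := by
    intro a ha hne
    unfold mergeP
    rw [if_pos (hCK ha), if_neg (hnc a ha), hC a ha, if_neg hne]
  have keyR : ∀ a ∈ C, t.parent a = a → mergeP K' c r tr a = r := by
    intro a ha hne
    unfold mergeP
    rw [if_pos (hCK ha), if_neg (hnc a ha), hC a ha, if_pos hne]
  have keyW : ∀ a ∈ C, t.parent a ≠ a → mergeW K' c tr M a = t.w a := by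
    intro a ha hne
    unfold mergeW
    rw [if_pos (hCK ha), if_neg (hnc a ha), hC a ha, if_neg hne]
  have hrb : ∀ b ∈ C, t.parent b ≠ b → r ≠ b := by
    intro b hb hne e
    apply hne
    have := hroot
    rw [e, hC b hb] at this
    exact this
  have hmemC : ∀ {a b : V}, t.parent a = b → a ≠ b → a ∈ C := by
    intro a b hpa hab
    by_contra haC
    exact hab (((hout a haC).symm.trans hpa))
  intro a b hadj
  obtain ⟨hab, hor⟩ := hadj
  -- adjacency in the merged tree
  have hAdj : (pGraph (mergeP K' c r tr)).Adj a b := by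
    rcases hor with hpa | hpb
    · have haC : a ∈ C := hmemC hpa hab
      have hne : t.parent a ≠ a := by rw [hpa]; exact Ne.symm hab
      exact ⟨hab, Or.inl ((key a haC hne).trans hpa)⟩
    · have hbC : b ∈ C := hmemC hpb hab.symm
      have hne : t.parent b ≠ b := by rw [hpb]; exact hab
      have hba : (pGraph (mergeP K' c r tr)).Adj b a :=
        ⟨hab.symm, Or.inl ((key b hbC hne).trans hpb)⟩
      exact hba.symm
  refine ⟨hAdj, ?_⟩
  -- length agreement
  by_cases hpa : t.parent a = b
  · have haC : a ∈ C := hmemC hpa hab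
    have hne : t.parent a ≠ a := by rw [hpa]; exact Ne.symm hab
    have h1 : mergeP K' c r tr a = b := (key a haC hne).trans hpa
    show (if mergeP K' c r tr a = b then mergeW K' c tr M a else
        if mergeP K' c r tr b = a then mergeW K' c tr M b else 1)
      = (if t.parent a = b then t.w a else if t.parent b = a then t.w b else 1)
    rw [if_pos h1, if_pos hpa]
    exact keyW a haC hne
  · have hpb : t.parent b = a := by tauto
    have hbC : b ∈ C := hmemC hpb hab.symm
    have hneb : t.parent b ≠ b := by rw [hpb]; exact hab
    have haC : a ∈ C := hpb ▸ hmem b hbC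
    have h2 : mergeP K' c r tr b = a := (key b hbC hneb).trans hpb
    have h1 : mergeP K' c r tr a ≠ b := by
      by_cases hne : t.parent a = a
      · rw [keyR a haC hne]
        exact hrb b hbC hneb
      · rw [key a haC hne]
        exact hpa
    show (if mergeP K' c r tr a = b then mergeW K' c tr M a else
        if mergeP K' c r tr b = a then mergeW K' c tr M b else 1)
      = (if t.parent a = b then t.w a else if t.parent b = a then t.w b else 1)
    rw [if_neg h1, if_pos h2, if_neg hpa, if_pos hpb]
    exact keyW b hbC hneb

lemma mergeT_tdist_le (K' C : Finset V) (c r : V) (tr : V → VTree V) (M : ℝ≥0∞)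
    (hrc : r ≠ c) (hroot : (tr r).parent r = r)
    (hcons : ∀ x ∈ K', x ≠ c → (tr x).parent x ≠ x →
      ((tr x).parent x ∈ K' ∧ (tr x).parent x ≠ c ∧ tr ((tr x).parent x) = tr x))
    (t : VTree V) (hC : ∀ a ∈ C, tr a = t) (hCK : C ⊆ K') (hCc : c ∉ C)
    (hout : ∀ a, a ∉ C → t.parent a = a) (hmem : ∀ a ∈ C, t.parent a ∈ C) (x y : V) :
    (mergeT K' c r tr M hrc hroot hcons).tdist x y ≤ t.tdist x y :=
  gdist_anti (lenOf t) (mergeT_compat K' C c r tr M hrc hroot hcons t hC hCK hCc hout hmem) x y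

end compat


section mainlemma

noncomputable def Cls (T : WeightedTree V) (K' : Finset V) (c x : V) : Finset V := K'.filter (SRel T c x)

lemma mem_Cls {T : WeightedTree V} {K' : Finset V} {c x y : V} :
    y ∈ Cls T K' c x ↔ y ∈ K' ∧ SRel T c x y := Finset.mem_filter

lemma Cls_self {T : WeightedTree V} {K' : Finset V} {c x : V} (hx : x ∈ K') (hxc : x ≠ c) :
    x ∈ Cls T K' c x := mem_Cls.2 ⟨hx, srel_refl T hxc⟩

lemma Cls_ne_c {T : WeightedTree V} {K' : Finset V} {c x y : V} (hy : y ∈ Cls T K' c x) :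
    y ≠ c := (mem_Cls.1 hy).2.ne_right

lemma Cls_eq {T : WeightedTree V} {K' : Finset V} {c x y : V} (hy : y ∈ Cls T K' c x) :
    Cls T K' c y = Cls T K' c x := by
  have hxy : SRel T c x y := (mem_Cls.1 hy).2
  ext z
  rw [mem_Cls, mem_Cls]
  constructor
  · rintro ⟨hz, h⟩; exact ⟨hz, hxy.trans h⟩
  · rintro ⟨hz, h⟩; exact ⟨hz, hxy.symm.trans h⟩

lemma main [Fintype V] [Nonempty V] (T : WeightedTree V) :
    ∀ (k : ℕ) (K' : Finset V), K'.Nonempty → K'.card ≤ k →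
    ∃ Ts : List (VTree V), Ts.length ≤ Nat.clog 2 K'.card + 1 ∧
      (∀ t ∈ Ts, IsGood T K' t) ∧
      (∀ x ∈ K', ∀ y ∈ K', ∃ t ∈ Ts, t.tdist x y ≤ 2 * T.dist x y) := by
  intro k
  induction k with
  | zero =>
    rintro K' ⟨a, ha⟩ h0
    have := Finset.card_pos.2 ⟨a, ha⟩
    omega
  | succ k ih =>
    intro K' hne hcard
    by_cases hsmall : K'.card ≤ k
    · exact ih K' hne hsmall
    by_cases hone : K'.card = 1
    · obtain ⟨x0, hx0⟩ := Finset.card_eq_one.1 hone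
      refine ⟨[idT x0], ?_, ?_, ?_⟩
      · rw [hone, Nat.clog_one_right]
        simp
      · intro t ht
        rw [List.mem_singleton] at ht
        subst ht
        refine ⟨?_, ?_, ?_, ?_, ?_, ?_, ?_⟩
        · rw [hx0]; exact Finset.mem_singleton_self x0
        · intro x hx; exact hx
        · intro x _; rfl
        · intro x hx _; rw [hx0, Finset.mem_singleton] at hx; exact hx
        · intro x
          rw [show (idT x0).parent x = x from rfl, dist_self]
          exact zero_le
        · intro x h; exact absurd rfl h
        · intro x h; exact absurd rfl h
      · intro x hx y hy
        rw [hx0, Finset.mem_singleton] at hx hy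
        subst hx; subst hy
        exact ⟨_, List.mem_singleton_self _,
          by rw [VTree.tdist, gdist_self]; exact zero_le⟩
    have hK2 : 2 ≤ K'.card := by
      have := Finset.card_pos.2 hne
      omega
    obtain ⟨c, hc⟩ := exists_centroid T K'
    obtain ⟨k0, hk0K, hk0min⟩ := Finset.exists_min_image K' (fun z => T.dist c z) hne
    set M : ℝ≥0∞ := (∑ p ∈ Finset.univ ×ˢ Finset.univ, T.dist p.1 p.2) + 1 with hMdef
    have hMbig : ∀ a b : V, T.dist a b ≤ M := by
      intro a b
      refine le_trans ?_ le_self_add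
      exact Finset.single_le_sum (f := fun p : V × V => T.dist p.1 p.2)
        (fun _ _ => zero_le) (by simp : ((a, b) : V × V) ∈ Finset.univ ×ˢ Finset.univ)
    have hMpos : 0 < M := lt_of_lt_of_le zero_lt_one le_add_self
    have hMtop : M ≠ ⊤ := by
      rw [hMdef]
      refine ENNReal.add_ne_top.2 ⟨?_, ENNReal.one_ne_top⟩
      exact (ENNReal.sum_lt_top.2 fun p _ => (dist_ne_top T p.1 p.2).lt_top).ne
    set L := Nat.clog 2 K'.card with hLdef
    have hLpieces : ∀ n : ℕ, 2 * n ≤ K'.card → Nat.clog 2 n + 1 ≤ L := by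
      intro n hn
      have h1 : n ≤ (K'.card + 1) / 2 := by omega
      have h2 := Nat.clog_mono_right 2 h1
      have harg : (K'.card + 2 - 1) / 2 = (K'.card + 1) / 2 := by omega
      have h3 : Nat.clog 2 ((K'.card + 1) / 2) + 1 = L := by
        rw [hLdef, Nat.clog_of_two_le one_lt_two hK2, harg]
      omega
    have H : ∀ C : Finset V, ∃ Ts : List (VTree V),
        (∃ v ∈ K', v ≠ c ∧ C = Cls T K' c v) →
        (Ts.length = L ∧ (∀ t ∈ Ts, IsGood T C t) ∧
          (∀ x ∈ C, ∀ y ∈ C, ∃ t ∈ Ts, t.tdist x y ≤ 2 * T.dist x y)) := by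
      intro C
      by_cases hC : ∃ v ∈ K', v ≠ c ∧ C = Cls T K' c v
      swap
      · exact ⟨[], fun h => absurd h hC⟩
      obtain ⟨v, hvK, hvc, hCv⟩ := hC
      have hvC : v ∈ C := hCv ▸ Cls_self hvK hvc
      have hCcard : 2 * C.card ≤ K'.card := by rw [hCv]; exact hc v hvK hvc
      have hCk : C.card ≤ k := by
        have h1 := Finset.card_pos.2 ⟨v, hvC⟩
        omega
      obtain ⟨Ts0, hlen0, hgood0, hcov0⟩ := ih C ⟨v, hvC⟩ hCk
      have hlenL : Ts0.length ≤ L := le_trans hlen0 (hLpieces C.card hCcard)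
      have hpadgood : IsGood T C (starT C v (fun _ => M)) := by
        refine ⟨hvC, ?_, ?_, ?_, ?_, ?_, ?_⟩
        · intro x hx
          show starP C v x ∈ C
          by_cases hxv : x = v
          · rw [hxv, starP_self (Or.inr rfl)]; exact hvC
          · rw [starP_of_ne hx hxv]; exact hvC
        · intro x hx
          exact starP_self (Or.inl hx)
        · intro x hx hp
          rw [starT_parent] at hp
          by_cases hxv : x = v
          · exact hxv
          · rw [starP_of_ne hx hxv] at hp
            exact absurd hp.symm hxv
        · intro x
          show T.dist x (starP C v x) ≤ M
          by_cases hx : x ∈ C ∧ x ≠ v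
          · rw [starP_of_ne hx.1 hx.2]; exact hMbig x v
          · rw [starP_self (K' := C) (k0 := v) (z := x) (by tauto), dist_self]
            exact zero_le
        · intro x _; exact hMpos
        · intro x _; exact hMtop
      refine ⟨Ts0 ++ List.replicate (L - Ts0.length) (starT C v (fun _ => M)),
        fun _ => ⟨?_, ?_, ?_⟩⟩
      · rw [List.length_append, List.length_replicate]; omega
      · intro t ht
        rcases List.mem_append.1 ht with ht | ht
        · exact hgood0 t ht
        · rw [List.eq_of_mem_replicate ht]; exact hpadgood
      · intro x hx y hy
        obtain ⟨t, ht, hle⟩ := hcov0 x hx y hy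
        exact ⟨t, List.mem_append_left _ ht, hle⟩
    choose f hf using H
    set tr : ℕ → V → VTree V := fun i x => (f (Cls T K' c x)).getD i (idT c) with htrdef
    have htr_congr : ∀ (i : ℕ) (x y : V), Cls T K' c y = Cls T K' c x → tr i y = tr i x := by
      intro i x y h
      show (f (Cls T K' c y)).getD i (idT c) = (f (Cls T K' c x)).getD i (idT c)
      rw [h]
    have htrK : ∀ i, i < L → ∀ x ∈ K', x ≠ c →
        (tr i x ∈ f (Cls T K' c x) ∧ IsGood T (Cls T K' c x) (tr i x)) := by
      intro i hi x hx hxc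
      have hfx := hf (Cls T K' c x) ⟨x, hx, hxc, rfl⟩
      have hilen : i < (f (Cls T K' c x)).length := by rw [hfx.1]; exact hi
      have heq : tr i x = (f (Cls T K' c x))[i] := List.getD_eq_getElem _ _ hilen
      constructor
      · rw [heq]; exact List.getElem_mem _
      · rw [heq]; exact hfx.2.1 _ (List.getElem_mem _)
    obtain ⟨v0, hv0K, hv0c⟩ := Finset.exists_mem_ne hK2 c
    have hv0C0 : v0 ∈ Cls T K' c v0 := Cls_self hv0K hv0c
    set rt : ℕ → V := fun i => (tr i v0).root with hrtdef
    have hrtC0 : ∀ i, i < L → rt i ∈ Cls T K' c v0 :=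
      fun i hi => ((htrK i hi v0 hv0K hv0c).2).root_mem
    have hrtK : ∀ i, i < L → rt i ∈ K' :=
      fun i hi => (mem_Cls.1 (hrtC0 i hi)).1
    have hrc : ∀ i, i < L → rt i ≠ c :=
      fun i hi => Cls_ne_c (hrtC0 i hi)
    have hroot : ∀ i, i < L → (tr i (rt i)).parent (rt i) = rt i := by
      intro i hi
      have h2 : tr i (rt i) = tr i v0 := htr_congr i v0 (rt i) (Cls_eq (hrtC0 i hi))
      rw [h2]
      exact (tr i v0).parent_root
    have hconsm : ∀ i, i < L → ∀ x ∈ K', x ≠ c → (tr i x).parent x ≠ x →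
        ((tr i x).parent x ∈ K' ∧ (tr i x).parent x ≠ c ∧
          tr i ((tr i x).parent x) = tr i x) := by
      intro i hi x hx hxc hne
      have hgood := (htrK i hi x hx hxc).2
      have hxCls : x ∈ Cls T K' c x := Cls_self hx hxc
      have hpC : (tr i x).parent x ∈ Cls T K' c x := hgood.parent_mem x hxCls
      exact ⟨(mem_Cls.1 hpC).1, Cls_ne_c hpC, htr_congr i x _ (Cls_eq hpC)⟩
    -- the output list
    refine ⟨starT K' k0 (fun z => T.dist c z + T.dist c k0) ::
      (List.range L).attach.map (fun ip => mergeT K' c (rt ip.1) (tr ip.1) M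
        (hrc ip.1 (List.mem_range.1 ip.2)) (hroot ip.1 (List.mem_range.1 ip.2))
        (hconsm ip.1 (List.mem_range.1 ip.2))), ?_, ?_, ?_⟩
    · rw [List.length_cons, List.length_map, List.length_attach, List.length_range]
    · intro t ht
      rcases List.mem_cons.1 ht with ht | ht
      · subst ht
        refine ⟨hk0K, ?_, ?_, ?_, ?_, ?_, ?_⟩
        · intro x hx
          show starP K' k0 x ∈ K'
          by_cases hxk : x = k0
          · rw [hxk, starP_self (Or.inr rfl)]; exact hk0K
          · rw [starP_of_ne hx hxk]; exact hk0K
        · intro x hx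
          exact starP_self (Or.inl hx)
        · intro x hx hp
          rw [starT_parent] at hp
          by_cases hxk : x = k0
          · exact hxk
          · rw [starP_of_ne hx hxk] at hp
            exact absurd hp.symm hxk
        · intro x
          show T.dist x (starP K' k0 x) ≤ T.dist c x + T.dist c k0
          by_cases hx : x ∈ K' ∧ x ≠ k0
          · rw [starP_of_ne hx.1 hx.2, ← dist_symm T x c]
            exact dist_triangle T x c k0
          · rw [starP_self (K' := K') (k0 := k0) (z := x) (by tauto), dist_self]
            exact zero_le
        · intro x hne
          have hx : x ∈ K' ∧ x ≠ k0 := by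
            by_contra hcon
            exact hne (starP_self (K' := K') (k0 := k0) (z := x) (by tauto))
          have h1 : 0 < T.dist x k0 := dist_pos T hx.2
          refine lt_of_lt_of_le h1 ?_
          show T.dist x k0 ≤ T.dist c x + T.dist c k0
          rw [← dist_symm T x c]
          exact dist_triangle T x c k0
        · intro x _
          exact ENNReal.add_ne_top.2 ⟨dist_ne_top T c x, dist_ne_top T c k0⟩
      · obtain ⟨ip, _, rfl⟩ := List.mem_map.1 ht
        have hi : ip.1 < L := List.mem_range.1 ip.2
        refine ⟨hrtK ip.1 hi, ?_, ?_, ?_, ?_, ?_, ?_⟩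
        · intro x hx
          show mergeP K' c (rt ip.1) (tr ip.1) x ∈ K'
          unfold mergeP
          rw [if_pos hx]
          by_cases hxc : x = c
          · rw [if_pos hxc]; exact hrtK ip.1 hi
          rw [if_neg hxc]
          by_cases hpp : (tr ip.1 x).parent x = x
          · rw [if_pos hpp]; exact hrtK ip.1 hi
          · rw [if_neg hpp]; exact (hconsm ip.1 hi x hx hxc hpp).1
        · intro x hx
          show mergeP K' c (rt ip.1) (tr ip.1) x = x
          unfold mergeP
          rw [if_neg hx]
        · intro x hx hp
          revert hp
          show mergeP K' c (rt ip.1) (tr ip.1) x = x → x = rt ip.1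
          unfold mergeP
          rw [if_pos hx]
          by_cases hxc : x = c
          · rw [if_pos hxc]; exact fun e => e.symm
          rw [if_neg hxc]
          by_cases hpp : (tr ip.1 x).parent x = x
          · rw [if_pos hpp]; exact fun e => e.symm
          · rw [if_neg hpp]; exact fun e => absurd e hpp
        · intro x
          show T.dist x (mergeP K' c (rt ip.1) (tr ip.1) x) ≤ mergeW K' c (tr ip.1) M x
          unfold mergeP mergeW
          by_cases hx : x ∈ K'
          swap
          · rw [if_neg hx, if_neg hx, dist_self]
            exact zero_le
          rw [if_pos hx, if_pos hx]
          by_cases hxc : x = c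
          · rw [if_pos hxc, if_pos hxc]; exact hMbig _ _
          rw [if_neg hxc, if_neg hxc]
          by_cases hpp : (tr ip.1 x).parent x = x
          · rw [if_pos hpp, if_pos hpp]; exact hMbig _ _
          · rw [if_neg hpp, if_neg hpp]
            exact ((htrK ip.1 hi x hx hxc).2).dom x
        · intro x hne
          show 0 < mergeW K' c (tr ip.1) M x
          revert hne
          show mergeP K' c (rt ip.1) (tr ip.1) x ≠ x → _
          unfold mergeP mergeW
          by_cases hx : x ∈ K'
          swap
          · rw [if_neg hx]; exact fun h => absurd rfl h
          rw [if_pos hx, if_pos hx]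
          by_cases hxc : x = c
          · rw [if_pos hxc, if_pos hxc]; exact fun _ => hMpos
          rw [if_neg hxc, if_neg hxc]
          by_cases hpp : (tr ip.1 x).parent x = x
          · rw [if_pos hpp, if_pos hpp]; exact fun _ => hMpos
          · rw [if_neg hpp, if_neg hpp]
            exact fun _ => ((htrK ip.1 hi x hx hxc).2).pos x hpp
        · intro x hne
          show mergeW K' c (tr ip.1) M x ≠ ⊤
          revert hne
          show mergeP K' c (rt ip.1) (tr ip.1) x ≠ x → _
          unfold mergeP mergeW
          by_cases hx : x ∈ K'
          swap
          · rw [if_neg hx]; exact fun h => absurd rfl h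
          rw [if_pos hx, if_pos hx]
          by_cases hxc : x = c
          · rw [if_pos hxc, if_pos hxc]; exact fun _ => hMtop
          rw [if_neg hxc, if_neg hxc]
          by_cases hpp : (tr ip.1 x).parent x = x
          · rw [if_pos hpp, if_pos hpp]; exact fun _ => hMtop
          · rw [if_neg hpp, if_neg hpp]
            exact fun _ => ((htrK ip.1 hi x hx hxc).2).fin x hpp
    · intro x hx y hy
      by_cases hxy : x = y
      · subst hxy
        exact ⟨_, List.mem_cons_self,
          by rw [VTree.tdist, gdist_self]; exact zero_le⟩
      by_cases hrel : SRel T c x y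
      · have hxc := hrel.ne_left
        have hyCls : y ∈ Cls T K' c x := mem_Cls.2 ⟨hy, hrel⟩
        have hxCls : x ∈ Cls T K' c x := Cls_self hx hxc
        have hfx := hf (Cls T K' c x) ⟨x, hx, hxc, rfl⟩
        obtain ⟨t, htmem, hle⟩ := hfx.2.2 x hxCls y hyCls
        obtain ⟨i, hiL, hti⟩ := List.mem_iff_getElem.1 htmem
        have hiL' : i < L := by rw [hfx.1] at hiL; exact hiL
        have htr_eq : tr i x = t := by
          show (f (Cls T K' c x)).getD i (idT c) = t
          rw [List.getD_eq_getElem _ _ hiL, hti]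
        have hgood := (htrK i hiL' x hx hxc).2
        rw [htr_eq] at hgood
        refine ⟨mergeT K' c (rt i) (tr i) M (hrc i hiL') (hroot i hiL') (hconsm i hiL'),
          ?_, ?_⟩
        · refine List.mem_cons_of_mem _ (List.mem_map.2 ⟨⟨i, List.mem_range.2 hiL'⟩,
            List.mem_attach _ _, rfl⟩)
        · refine le_trans (mergeT_tdist_le K' (Cls T K' c x) c (rt i) (tr i) M
            (hrc i hiL') (hroot i hiL') (hconsm i hiL') t ?_ ?_ ?_ ?_ ?_ x y) hle
          · intro a ha
            rw [htr_congr i x a (Cls_eq ha)]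
            exact htr_eq
          · exact Finset.filter_subset _ _
          · intro hcC
            exact Cls_ne_c hcC rfl
          · intro a ha
            exact hgood.parent_eq a ha
          · intro a ha
            exact hgood.parent_mem a ha
      · refine ⟨_, List.mem_cons_self, ?_⟩
        have hsep : T.dist x y = T.dist x c + T.dist c y := dist_split T hrel
        calc (starT K' k0 (fun z => T.dist c z + T.dist c k0)).tdist x y
            ≤ (T.dist c x + T.dist c k0) + (T.dist c y + T.dist c k0) :=
              starT_tdist_le _ _ _ hx hy
          _ ≤ (T.dist c x + T.dist c x) + (T.dist c y + T.dist c y) :=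
              add_le_add (add_le_add_right (hk0min x hx) _) (add_le_add_right (hk0min y hy) _)
          _ = 2 * (T.dist x c + T.dist c y) := by rw [dist_symm T x c]; ring
          _ = 2 * T.dist x y := by rw [← hsep]

end mainlemma


section final

variable (T : WeightedTree V) (K : Set V) (KF : Finset V)
  (hKF : ∀ v, v ∈ KF ↔ v ∈ K) (t : VTree V) (ht : IsGood T KF t)

/-- Convert a good `VTree` on the terminal set into a `WeightedTree` on `↥K`. -/
noncomputable def toWT : WeightedTree ↥K where
  graph := pGraph (fun a : ↥K => ⟨t.parent a.1, (hKF _).1 (ht.parent_mem a.1 ((hKF _).2 a.2))⟩)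
  isTree := pGraph_isTree _ (fun a => t.rank a.1) ⟨t.root, (hKF _).1 ht.root_mem⟩
    (fun x hx => Subtype.ext (ht.eq_root x.1 ((hKF _).2 x.2) (congrArg Subtype.val hx)))
    (fun x hx => t.rank_lt x.1 (fun e => hx (Subtype.ext e)))
  len a b := lenOf t a.1 b.1
  len_symm a b := lenOf_symm t a.1 b.1
  len_pos := by
    rintro a b ⟨hab, hor⟩
    have hab' : a.1 ≠ b.1 := fun e => hab (Subtype.ext e)
    show 0 < lenOf t a.1 b.1
    by_cases h2 : t.parent a.1 = b.1
    · rw [lenOf_eq_left h2]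
      exact ht.pos a.1 (by rw [h2]; exact hab'.symm)
    · have hp : t.parent b.1 = a.1 := by
        rcases hor with h | h
        · exact absurd (congrArg Subtype.val h) h2
        · exact congrArg Subtype.val h
      unfold lenOf
      rw [if_neg h2, if_pos hp]
      exact ht.pos b.1 (by rw [hp]; exact hab')
  len_ne_top := by
    rintro a b ⟨hab, hor⟩
    have hab' : a.1 ≠ b.1 := fun e => hab (Subtype.ext e)
    show lenOf t a.1 b.1 ≠ ⊤
    by_cases h2 : t.parent a.1 = b.1
    · rw [lenOf_eq_left h2]
      exact ht.fin a.1 (by rw [h2]; exact hab'.symm)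
    · have hp : t.parent b.1 = a.1 := by
        rcases hor with h | h
        · exact absurd (congrArg Subtype.val h) h2
        · exact congrArg Subtype.val h
      unfold lenOf
      rw [if_neg h2, if_pos hp]
      exact ht.fin b.1 (by rw [hp]; exact hab')

lemma toWT_dist_ge (x y : ↥K) :
    T.dist x.1 y.1 ≤ (toWT T K KF hKF t ht).dist x y := by
  refine le_gdist_of_lipschitz _ (fun a b : ↥K => T.dist a.1 b.1)
    (fun a => dist_self T a.1) (fun a b c' => dist_triangle T _ _ _) ?_ x y
  rintro a b ⟨hab, hor⟩
  have hab' : a.1 ≠ b.1 := fun e => hab (Subtype.ext e)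
  show T.dist a.1 b.1 ≤ lenOf t a.1 b.1
  by_cases h2 : t.parent a.1 = b.1
  · rw [lenOf_eq_left h2, ← h2]
    exact ht.dom a.1
  · have hp : t.parent b.1 = a.1 := by
      rcases hor with h | h
      · exact absurd (congrArg Subtype.val h) h2
      · exact congrArg Subtype.val h
    unfold lenOf
    rw [if_neg h2, if_pos hp, dist_symm T a.1 b.1, ← hp]
    exact ht.dom b.1

lemma toWT_dist_le (x y : ↥K) :
    (toWT T K KF hKF t ht).dist x y ≤ t.tdist x.1 y.1 := by
  refine le_iInf fun p => ?_
  suffices h : ∀ (a b : V) (p : (pGraph t.parent).Walk a b) (ha : a ∈ K) (hb : b ∈ K),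
      (toWT T K KF hKF t ht).dist ⟨a, ha⟩ ⟨b, hb⟩ ≤ walkLen (lenOf t) p by
    exact h x.1 y.1 p x.2 y.2
  intro a b p
  induction p with
  | nil =>
    intro ha hb
    rw [walkLen_nil]
    exact le_of_eq (gdist_self _ _)
  | @cons a b' b hadj p ih =>
    intro ha hb
    obtain ⟨hab, hor⟩ := id hadj
    have hbK : b' ∈ K := by
      rcases hor with h | h
      · have hm := ht.parent_mem a ((hKF a).2 ha)
        rw [h] at hm
        exact (hKF b').1 hm
      · by_contra hbK
        have hKFb : b' ∉ KF := fun hin => hbK ((hKF _).1 hin)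
        exact hab ((ht.parent_eq b' hKFb).symm.trans h).symm
    rw [walkLen_cons]
    have hadj' : (toWT T K KF hKF t ht).graph.Adj ⟨a, ha⟩ ⟨b', hbK⟩ := by
      refine ⟨fun e => hab (congrArg Subtype.val e), ?_⟩
      rcases hor with h | h
      · exact Or.inl (Subtype.ext h)
      · exact Or.inr (Subtype.ext h)
    have hstep : (toWT T K KF hKF t ht).dist ⟨a, ha⟩ ⟨b', hbK⟩ ≤ lenOf t a b' := by
      refine le_trans (gdist_le_walkLen _ (.cons hadj' .nil)) ?_
      rw [walkLen_cons, walkLen_nil, add_zero]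
      exact le_rfl
    refine le_trans (gdist_triangle _ _ ⟨b', hbK⟩ _) (add_le_add ?_ ?_)
    · exact hstep
    · exact ih hbK hb

end final

end NST

/-- Every weighted tree on `n ≥ 2` vertices with a nonempty set of
terminals `K` admits a non-Steiner tree cover of `(K, d_T)` of size at most
`⌈log₂ n⌉ + 1` and stretch `2`. -/
theorem nonSteiner_tree_cover_stretch_two (n : ℕ) (hn : 2 ≤ n)
    (V : Type) [Fintype V] (hcard : Fintype.card V = n)
    (T : WeightedTree V) (K : Set V) (hK : K.Nonempty) :
    ∃ Ts : List (WeightedTree ↥K),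
      Ts.length ≤ Nat.clog 2 n + 1 ∧
      IsNonSteinerTreeCover (fun x y : ↥K => (T.dist x.1 y.1).toReal) 2 Ts := by
  classical
  haveI : Nonempty V := Fintype.card_pos_iff.1 (by omega)
  obtain ⟨KF, hKF⟩ : ∃ KF : Finset V, ∀ v, v ∈ KF ↔ v ∈ K :=
    ⟨(Set.toFinite K).toFinset, fun v => Set.Finite.mem_toFinset _⟩
  obtain ⟨a0, ha0⟩ := hK
  have hKFne : KF.Nonempty := ⟨a0, (hKF a0).2 ha0⟩
  obtain ⟨Ts, hlen, hgood, hcov⟩ := NST.main T KF.card KF hKFne le_rfl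
  refine ⟨Ts.attach.map (fun tp => NST.toWT T K KF hKF tp.1 (hgood tp.1 tp.2)), ?_, ?_, ?_⟩
  · rw [List.length_map, List.length_attach]
    refine le_trans hlen ?_
    have h1 : KF.card ≤ n := by rw [← hcard]; exact Finset.card_le_univ KF
    exact add_le_add_left (Nat.clog_mono_right 2 h1) 1
  · intro T' hT' x y
    obtain ⟨tp, -, rfl⟩ := List.mem_map.1 hT'
    calc ENNReal.ofReal (T.dist x.1 y.1).toReal ≤ T.dist x.1 y.1 :=
          ENNReal.ofReal_toReal_le
      _ ≤ _ := NST.toWT_dist_ge T K KF hKF tp.1 (hgood tp.1 tp.2) x y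
  · intro x y
    obtain ⟨t, htmem, hle⟩ := hcov x.1 ((hKF _).2 x.2) y.1 ((hKF _).2 y.2)
    refine ⟨NST.toWT T K KF hKF t (hgood t htmem),
      List.mem_map.2 ⟨⟨t, htmem⟩, List.mem_attach _ _, rfl⟩, ?_⟩
    have h2 : ENNReal.ofReal (2 * (T.dist x.1 y.1).toReal) = 2 * T.dist x.1 y.1 := by
      rw [ENNReal.ofReal_mul (by norm_num), ENNReal.ofReal_toReal (NST.dist_ne_top T x.1 y.1)]
      norm_num
    rw [h2]
    exact le_trans (NST.toWT_dist_le T K KF hKF t (hgood t htmem) x y) hle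
end

section
/- There exists a constant c > 0 such that for every integer n ≥ 2 the following holds. Let d be the comb leaf metric on {1,…,n} with parameter M = n. Then every non-Steiner tree cover of the finite metric space ({1,…,n}, d) with stretch 2 has size at least c·log₂ n. -/
open scoped ENNReal

/-- The comb leaf metric on `{1,…,n}` with parameter `M`:
`d(i,j) = 2M + |i−j|` for `i ≠ j`, and `d(i,i) = 0`. -/
def combLeafD (n M : ℕ) (i j : Fin n) : ℝ :=
  if i = j then 0 else 2 * M + |(i.val : ℝ) - (j.val : ℝ)|

namespace NSTC

lemma dist_le_len {V : Type*} (T : WeightedTree V) {a b : V} (h : T.graph.Adj a b) :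
    T.dist a b ≤ T.len a b := by
  have h1 : T.dist a b ≤ walkLen T.len (SimpleGraph.Walk.cons h SimpleGraph.Walk.nil) :=
    iInf_le _ _
  simpa [walkLen] using h1

lemma abs_sub_ge_one {n : ℕ} {a b : Fin n} (h : a ≠ b) : (1:ℝ) ≤ |(a.val:ℝ) - (b.val:ℝ)| := by
  have hab : a.val ≠ b.val := fun hc => h (Fin.ext hc)
  rcases Nat.lt_or_ge a.val b.val with hl | hl
  · rw [abs_sub_comm, abs_of_nonneg (by simp; exact_mod_cast hl.le)]
    have : (a.val:ℝ) + 1 ≤ b.val := by exact_mod_cast hl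
    linarith
  · have hl' : b.val < a.val := lt_of_le_of_ne hl (Ne.symm hab)
    rw [abs_of_nonneg (by simp; exact_mod_cast hl)]
    have : (b.val:ℝ) + 1 ≤ a.val := by exact_mod_cast hl'
    linarith

lemma combLeafD_ge {n : ℕ} {a b : Fin n} (h : a ≠ b) :
    2*(n:ℝ) + 1 ≤ combLeafD n n a b := by
  unfold combLeafD
  rw [if_neg h]
  have := abs_sub_ge_one h
  linarith

lemma len_ge {n : ℕ} (T : WeightedTree (Fin n))
    (hdom : ∀ x y, ENNReal.ofReal (combLeafD n n x y) ≤ T.dist x y)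
    {a b : Fin n} (h : T.graph.Adj a b) :
    ENNReal.ofReal (combLeafD n n a b) ≤ T.len a b :=
  (hdom a b).trans (dist_le_len T h)

lemma len_ge' {n : ℕ} (T : WeightedTree (Fin n))
    (hdom : ∀ x y, ENNReal.ofReal (combLeafD n n x y) ≤ T.dist x y)
    {a b : Fin n} (h : T.graph.Adj a b) :
    ENNReal.ofReal (2*(n:ℝ)+1) ≤ T.len a b :=
  le_trans (ENNReal.ofReal_le_ofReal (combLeafD_ge h.ne)) (len_ge T hdom h)

lemma walk_three {n : ℕ} (T : WeightedTree (Fin n))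
    (hdom : ∀ x y, ENNReal.ofReal (combLeafD n n x y) ≤ T.dist x y)
    {x y : Fin n} (p : T.graph.Walk x y) (hp : 3 ≤ p.darts.length) :
    ENNReal.ofReal (3*(2*(n:ℝ)+1)) ≤ walkLen T.len p := by
  have h1 : ∀ z ∈ p.darts.map (fun d => T.len d.toProd.1 d.toProd.2),
      ENNReal.ofReal (2*(n:ℝ)+1) ≤ z := by
    intro z hz
    obtain ⟨d, hd, rfl⟩ := List.mem_map.1 hz
    exact len_ge' T hdom d.adj
  have h2 := List.card_nsmul_le_sum _ _ h1
  rw [List.length_map] at h2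
  refine le_trans ?_ h2
  have h3 : ENNReal.ofReal (3*(2*(n:ℝ)+1)) = (3:ℕ) • ENNReal.ofReal (2*(n:ℝ)+1) := by
    rw [nsmul_eq_mul, show ((3:ℕ):ℝ≥0∞) = ENNReal.ofReal 3 by simp,
      ← ENNReal.ofReal_mul (by norm_num)]
  rw [h3, nsmul_eq_mul, nsmul_eq_mul]
  exact mul_le_mul_left (by exact_mod_cast Nat.cast_le.2 hp) _

lemma shortWalk {n : ℕ} (T : WeightedTree (Fin n))
    (hdom : ∀ a b, ENNReal.ofReal (combLeafD n n a b) ≤ T.dist a b)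
    {x y : Fin n} (hxy : x ≠ y) {B : ℝ} (hB : T.dist x y ≤ ENNReal.ofReal B)
    (hB2 : B < 3*(2*(n:ℝ)+1)) :
    (T.graph.Adj x y ∧ T.len x y ≤ ENNReal.ofReal B) ∨
      ∃ m, T.graph.Adj x m ∧ T.graph.Adj m y ∧ T.len x m + T.len m y ≤ ENNReal.ofReal B := by
  classical
  have hnn : Nonempty (Fin n) := ⟨x⟩
  set g : ℝ≥0∞ := if T.graph.Adj x y then T.len x y else ⊤ with hg
  set f : Fin n → ℝ≥0∞ :=
    fun m => if T.graph.Adj x m ∧ T.graph.Adj m y then T.len x m + T.len m y else ⊤ with hf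
  have hK : ∀ p : T.graph.Walk x y,
      min (min g (⨅ m, f m)) (ENNReal.ofReal (3*(2*(n:ℝ)+1))) ≤ walkLen T.len p := by
    intro p
    cases p with
    | nil => exact absurd rfl hxy
    | cons h q =>
      rename_i v
      cases q with
      | nil =>
        have hgle : g ≤ walkLen T.len (SimpleGraph.Walk.cons h SimpleGraph.Walk.nil) := by
          rw [hg, if_pos h]
          simp [walkLen]
        exact le_trans (le_trans (min_le_left _ _) (min_le_left _ _)) hgle
      | cons h' r =>
        rename_i w
        cases r with
        | nil =>
          have hfle : f v ≤ walkLen T.len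
              (SimpleGraph.Walk.cons h (SimpleGraph.Walk.cons h' SimpleGraph.Walk.nil)) := by
            simp only [hf]
            rw [if_pos ⟨h, h'⟩]
            simp [walkLen]
          exact le_trans (le_trans (min_le_left _ _) (min_le_right _ _))
            (le_trans (iInf_le _ v) hfle)
        | cons h'' r' =>
          refine le_trans (min_le_right _ _) (walk_three T hdom _ ?_)
          simp [SimpleGraph.Walk.darts_cons]
  have hmin : min (min g (⨅ m, f m)) (ENNReal.ofReal (3*(2*(n:ℝ)+1))) ≤ ENNReal.ofReal B :=
    le_trans (le_iInf hK) hB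
  have hnotB : ¬ (ENNReal.ofReal (3*(2*(n:ℝ)+1)) ≤ ENNReal.ofReal B) := by
    refine not_le.2 ((ENNReal.ofReal_lt_ofReal_iff ?_).2 hB2)
    positivity
  have h1 : min g (⨅ m, f m) ≤ ENNReal.ofReal B := by
    rcases min_le_iff.1 hmin with h | h
    · exact h
    · exact absurd h hnotB
  rcases min_le_iff.1 h1 with h2 | h2
  · left
    by_cases hadj : T.graph.Adj x y
    · refine ⟨hadj, ?_⟩
      rwa [hg, if_pos hadj] at h2
    · rw [hg, if_neg hadj] at h2
      exact absurd (top_le_iff.1 h2) (by simp)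
  · right
    obtain ⟨m, hm⟩ := Finite.exists_min f
    have hfm : f m ≤ ENNReal.ofReal B := le_trans (le_iInf hm) h2
    by_cases hc : T.graph.Adj x m ∧ T.graph.Adj m y
    · refine ⟨m, hc.1, hc.2, ?_⟩
      simp only [hf] at hfm
      rwa [if_pos hc] at hfm
    · simp only [hf] at hfm
      rw [if_neg hc] at hfm
      exact absurd (top_le_iff.1 hfm) (by simp)

/-- Length bounds qualifying an edge as "charged at scale `4^t`". -/
def lenB (n : ℕ) (T : WeightedTree (Fin n)) (t : ℕ) (a b : Fin n) : Prop :=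
  ENNReal.ofReal (2*(n:ℝ) + ((4^t : ℕ):ℝ)/2) ≤ T.len a b ∧
    T.len a b ≤ ENNReal.ofReal (2*(n:ℝ) + 2*((4^t : ℕ):ℝ))

/-- The charge record for the pair `(i, i + 4^t)`. -/
def Good (n : ℕ) (T : WeightedTree (Fin n)) (t i : ℕ) (a b : Fin n) (sel : Fin 3) : Prop :=
  T.graph.Adj a b ∧
  ((sel = 0 ∧ a.val = i ∧ b.val = i + 4^t) ∨
   (sel = 1 ∧ a.val = i ∧ lenB n T t a b) ∨
   (sel = 2 ∧ b.val = i + 4^t ∧ lenB n T t a b))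

lemma charge_exists {n : ℕ} (hn : 2 ≤ n) {Ts : List (WeightedTree (Fin n))}
    (hcov : IsNonSteinerTreeCover (combLeafD n n) 2 Ts) (t i : ℕ) (hti : i + 4^t < n) :
    ∃ (k : ℕ) (hk : k < Ts.length) (a b : Fin n) (sel : Fin 3),
      Good n (Ts.get ⟨k, hk⟩) t i a b sel := by
  have h4 : (1:ℕ) ≤ 4^t := Nat.one_le_pow t 4 (by norm_num)
  set x : Fin n := ⟨i, by omega⟩ with hxdef
  set y : Fin n := ⟨i + 4^t, hti⟩ with hydef
  have hxy : x ≠ y := by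
    intro hc
    have := congrArg Fin.val hc
    simp [hxdef, hydef] at this
  have habs : |(x.val:ℝ) - (y.val:ℝ)| = ((4^t:ℕ):ℝ) := by
    show |(i:ℝ) - ((i + 4^t : ℕ):ℝ)| = _
    push_cast
    rw [show (i:ℝ) - ((i:ℝ) + (4:ℝ)^t) = -((4:ℝ)^t) by ring, abs_neg,
      abs_of_nonneg (by positivity)]
  have hd : combLeafD n n x y = 2*(n:ℝ) + ((4^t:ℕ):ℝ) := by
    unfold combLeafD
    rw [if_neg hxy, habs]
  obtain ⟨T, hTmem, hTle⟩ := hcov.2 x y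
  have hdom := hcov.1 T hTmem
  obtain ⟨k, hk, heq⟩ := List.getElem_of_mem hTmem
  set s : ℕ := 4^t with hsdef
  have hsn : s < n := by omega
  have hBlt : 2 * combLeafD n n x y < 3*(2*(n:ℝ)+1) := by
    rw [hd]
    have : (s:ℝ) < n := by exact_mod_cast hsn
    linarith
  rcases shortWalk T hdom hxy hTle hBlt with ⟨hadj, hle⟩ | ⟨m, h1, h2, hle⟩
  · refine ⟨k, hk, x, y, 0, ?_⟩
    rw [List.get_eq_getElem, heq]
    exact ⟨hadj, Or.inl ⟨rfl, rfl, rfl⟩⟩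
  · have hft : T.len x m + T.len m y ≠ ⊤ :=
      ne_top_of_le_ne_top ENNReal.ofReal_ne_top hle
    have hlx : T.len x m ≠ ⊤ := fun hc => hft (by rw [hc]; simp)
    have hly : T.len m y ≠ ⊤ := fun hc => hft (by rw [hc]; simp)
    set Lx := (T.len x m).toReal with hLx
    set Ly := (T.len m y).toReal with hLy
    have hxm : 2*(n:ℝ) + |(x.val:ℝ) - (m.val:ℝ)| ≤ Lx := by
      have h5 := len_ge T hdom h1
      rw [ENNReal.ofReal_le_iff_le_toReal hlx] at h5
      unfold combLeafD at h5
      rw [if_neg h1.ne] at h5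
      push_cast at h5 ⊢
      linarith
    have hmy : 2*(n:ℝ) + |(m.val:ℝ) - (y.val:ℝ)| ≤ Ly := by
      have h5 := len_ge T hdom h2
      rw [ENNReal.ofReal_le_iff_le_toReal hly] at h5
      unfold combLeafD at h5
      rw [if_neg h2.ne] at h5
      push_cast at h5 ⊢
      linarith
    have habs1 := abs_sub_ge_one h1.ne
    have habs2 := abs_sub_ge_one h2.ne
    have hB0 : (0:ℝ) ≤ 2 * combLeafD n n x y := by rw [hd]; positivity
    have hsum : Lx + Ly ≤ 2 * combLeafD n n x y := by
      have h6 : (T.len x m + T.len m y).toReal ≤ 2 * combLeafD n n x y := by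
        calc (T.len x m + T.len m y).toReal
            ≤ (ENNReal.ofReal (2 * combLeafD n n x y)).toReal :=
              ENNReal.toReal_mono ENNReal.ofReal_ne_top hle
          _ = 2 * combLeafD n n x y := ENNReal.toReal_ofReal hB0
      rwa [ENNReal.toReal_add hlx hly] at h6
    have htri : (s:ℝ) ≤ |(x.val:ℝ) - (m.val:ℝ)| + |(m.val:ℝ) - (y.val:ℝ)| := by
      calc (s:ℝ) = |(x.val:ℝ) - (y.val:ℝ)| := habs.symm
        _ ≤ _ := abs_sub_le _ _ _
    rw [hd] at hsum
    rcases le_total Ly Lx with hc | hc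
    · refine ⟨k, hk, x, m, 1, ?_⟩
      rw [List.get_eq_getElem, heq]
      refine ⟨h1, Or.inr (Or.inl ⟨rfl, rfl, ?_, ?_⟩)⟩
      · exact ENNReal.ofReal_le_of_le_toReal (by rw [← hLx]; linarith)
      · rw [ENNReal.le_ofReal_iff_toReal_le hlx (by positivity)]
        rw [← hLx]; linarith
    · refine ⟨k, hk, m, y, 2, ?_⟩
      rw [List.get_eq_getElem, heq]
      refine ⟨h2, Or.inr (Or.inr ⟨rfl, rfl, ?_, ?_⟩)⟩
      · exact ENNReal.ofReal_le_of_le_toReal (by rw [← hLy]; linarith)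
      · rw [ENNReal.le_ofReal_iff_toReal_le hly (by positivity)]
        rw [← hLy]; linarith

lemma t_close {n : ℕ} {T : WeightedTree (Fin n)} {t1 t2 : ℕ} {a b : Fin n}
    (h1 : lenB n T t1 a b) (h2 : lenB n T t2 a b) : t1 ≤ t2 + 1 := by
  have h := h1.1.trans h2.2
  rw [ENNReal.ofReal_le_ofReal_iff (by positivity)] at h
  have hr : ((4:ℝ))^t1 ≤ (4:ℝ)^(t2+1) := by
    push_cast at h
    rw [pow_succ]
    linarith
  have hnat : (4:ℕ)^t1 ≤ 4^(t2+1) := by exact_mod_cast hr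
  exact (Nat.pow_le_pow_iff_right (by norm_num)).1 hnat

lemma adjPairs_card {n : ℕ} (hn : 2 ≤ n) (T : WeightedTree (Fin n))
    [DecidablePred (fun q : Fin n × Fin n => T.graph.Adj q.1 q.2)] :
    (Finset.univ.filter (fun q : Fin n × Fin n => T.graph.Adj q.1 q.2)).card ≤ 2 * (n - 1) := by
  classical
  have hsub : Finset.univ.filter (fun q : Fin n × Fin n => T.graph.Adj q.1 q.2) ⊆
      Finset.univ.image (fun d : T.graph.Dart => d.toProd) := by
    intro q hq
    rw [Finset.mem_filter] at hq
    exact Finset.mem_image.2 ⟨⟨q, hq.2⟩, Finset.mem_univ _, rfl⟩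
  calc (Finset.univ.filter (fun q : Fin n × Fin n => T.graph.Adj q.1 q.2)).card
      ≤ (Finset.univ.image (fun d : T.graph.Dart => d.toProd)).card := Finset.card_le_card hsub
    _ ≤ (Finset.univ : Finset T.graph.Dart).card := Finset.card_image_le
    _ = Fintype.card T.graph.Dart := Finset.card_univ
    _ = 2 * T.graph.edgeFinset.card := T.graph.dart_card_eq_twice_card_edges
    _ ≤ 2 * (n - 1) := by
        have h1 := T.isTree.card_edgeFinset
        rw [Fintype.card_fin] at h1
        omega

theorem key (n : ℕ) (hn : 2 ≤ n) (Ts : List (WeightedTree (Fin n)))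
    (hcov : IsNonSteinerTreeCover (combLeafD n n) 2 Ts) :
    (1/200 : ℝ) * Real.logb 2 n ≤ (Ts.length : ℝ) := by
  classical
  have hne : Ts ≠ [] := by
    obtain ⟨T, hT, -⟩ := hcov.2 (⟨0, by omega⟩ : Fin n) ⟨1, by omega⟩
    intro hc
    rw [hc] at hT
    simp at hT
  have hlen1 : 1 ≤ Ts.length := List.length_pos_iff.2 hne
  set L := Nat.log 4 n with hLdef
  set P : Finset (ℕ × ℕ) :=
    (Finset.range L).biUnion (fun t => {t} ×ˢ Finset.range (n - 4^t)) with hPdef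
  have hPmem : ∀ p ∈ P, p.2 + 4^p.1 < n := by
    intro p hp
    rw [hPdef] at hp
    simp only [Finset.mem_biUnion, Finset.mem_range, Finset.mem_product,
      Finset.mem_singleton] at hp
    obtain ⟨t, ht, h1, h2⟩ := hp
    subst h1
    omega
  have hexists : ∀ p : ℕ × ℕ, ∃ (k : ℕ) (a b : Fin n) (sel : Fin 3),
      p ∈ P → ∃ hk : k < Ts.length, Good n (Ts.get ⟨k, hk⟩) p.1 p.2 a b sel := by
    intro p
    by_cases hp : p ∈ P
    · obtain ⟨k, hk, a, b, sel, hGd⟩ := charge_exists hn hcov p.1 p.2 (hPmem p hp)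
      exact ⟨k, a, b, sel, fun _ => ⟨hk, hGd⟩⟩
    · exact ⟨0, ⟨0, by omega⟩, ⟨0, by omega⟩, 0, fun h => absurd h hp⟩
  choose k a b sel hG using hexists
  set Φ : ℕ × ℕ → ℕ × ((Fin n × Fin n) × (Fin 3 × ℕ)) :=
    fun p => (k p, ((a p, b p), (sel p, p.1 % 2))) with hPhidef
  set Q : Finset (ℕ × ((Fin n × Fin n) × (Fin 3 × ℕ))) :=
    (Finset.univ : Finset (Fin Ts.length)).biUnion (fun kk =>
      {(kk : ℕ)} ×ˢ ((Finset.univ.filter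
          (fun q : Fin n × Fin n => (Ts.get kk).graph.Adj q.1 q.2)) ×ˢ
        ((Finset.univ : Finset (Fin 3)) ×ˢ Finset.range 2))) with hQdef
  have hmaps : ∀ p ∈ P, Φ p ∈ Q := by
    intro p hp
    obtain ⟨hk, hGood⟩ := hG p hp
    rw [hQdef]
    refine Finset.mem_biUnion.2 ⟨⟨k p, hk⟩, Finset.mem_univ _, ?_⟩
    simp only [hPhidef, Finset.mem_product, Finset.mem_singleton, Finset.mem_filter,
      Finset.mem_univ, Finset.mem_range, true_and]
    exact ⟨hGood.1, by omega⟩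
  have hinj : Set.InjOn Φ P := by
    intro p1 hp1 p2 hp2 heq
    obtain ⟨hk1, hG1⟩ := hG p1 hp1
    obtain ⟨hk2, hG2⟩ := hG p2 hp2
    simp only [hPhidef, Prod.mk.injEq] at heq
    obtain ⟨ek, ⟨ea, eb⟩, es, epar⟩ := heq
    have etree : Ts.get ⟨k p1, hk1⟩ = Ts.get ⟨k p2, hk2⟩ := by
      congr 1
      exact Fin.ext ek
    rw [← etree, ← ea, ← eb] at hG2
    obtain ⟨-, hc1⟩ := hG1
    obtain ⟨-, hc2⟩ := hG2
    rcases hc1 with ⟨e1, hi1, hb1⟩ | ⟨e1, hi1, hl1⟩ | ⟨e1, hi1, hl1⟩ <;>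
      rcases hc2 with ⟨e2, hi2, hb2⟩ | ⟨e2, hi2, hl2⟩ | ⟨e2, hi2, hl2⟩ <;>
      [skip; (rw [es, e2] at e1; exact absurd e1 (by decide));
       (rw [es, e2] at e1; exact absurd e1 (by decide));
       (rw [es, e2] at e1; exact absurd e1 (by decide)); skip;
       (rw [es, e2] at e1; exact absurd e1 (by decide));
       (rw [es, e2] at e1; exact absurd e1 (by decide));
       (rw [es, e2] at e1; exact absurd e1 (by decide)); skip]
    · have h4 : (4:ℕ)^p1.1 = 4^p2.1 := by omega
      have et := Nat.pow_right_injective (by norm_num) h4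
      exact Prod.ext et (by omega)
    · have h12 := t_close hl1 hl2
      have h21 := t_close hl2 hl1
      have et : p1.1 = p2.1 := by omega
      exact Prod.ext et (by omega)
    · have h12 := t_close hl1 hl2
      have h21 := t_close hl2 hl1
      have et : p1.1 = p2.1 := by omega
      have hpow : (4:ℕ)^p1.1 = 4^p2.1 := by rw [et]
      exact Prod.ext et (by omega)
  have hcard : P.card ≤ Q.card := Finset.card_le_card_of_injOn Φ hmaps hinj
  have hQcard : Q.card ≤ Ts.length * (12 * n) := by
    rw [hQdef]
    refine le_trans Finset.card_biUnion_le ?_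
    have hone : ∀ kk : Fin Ts.length,
        ({(kk : ℕ)} ×ˢ ((Finset.univ.filter
            (fun q : Fin n × Fin n => (Ts.get kk).graph.Adj q.1 q.2)) ×ˢ
          ((Finset.univ : Finset (Fin 3)) ×ˢ Finset.range 2))).card ≤ 12 * n := by
      intro kk
      rw [Finset.card_product, Finset.card_product, Finset.card_product,
        Finset.card_singleton, Finset.card_range, Finset.card_univ, Fintype.card_fin]
      have hA := adjPairs_card hn (Ts.get kk)
      omega
    calc ∑ kk : Fin Ts.length, ({(kk : ℕ)} ×ˢ ((Finset.univ.filter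
            (fun q : Fin n × Fin n => (Ts.get kk).graph.Adj q.1 q.2)) ×ˢ
          ((Finset.univ : Finset (Fin 3)) ×ˢ Finset.range 2))).card
        ≤ ∑ _kk : Fin Ts.length, 12 * n := Finset.sum_le_sum (fun kk _ => hone kk)
      _ = Ts.length * (12 * n) := by
          rw [Finset.sum_const, Finset.card_univ, Fintype.card_fin, smul_eq_mul]
  have hPcard : L * (n - n/4) ≤ P.card := by
    rw [hPdef, Finset.card_biUnion]
    · have hterm : ∀ t ∈ Finset.range L,
          (n - n/4) ≤ ({t} ×ˢ Finset.range (n - 4^t)).card := by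
        intro t ht
        rw [Finset.card_product, Finset.card_singleton, Finset.card_range, one_mul]
        rw [Finset.mem_range] at ht
        have h1 : (4:ℕ)^(t+1) ≤ 4^L := Nat.pow_le_pow_right (by norm_num) (by omega)
        have h2 : (4:ℕ)^L ≤ n := Nat.pow_log_le_self 4 (by omega)
        have h3 : (4:ℕ)^(t+1) = 4^t * 4 := pow_succ 4 t
        omega
      calc L * (n - n/4) = ∑ _t ∈ Finset.range L, (n - n/4) := by
            rw [Finset.sum_const, Finset.card_range, smul_eq_mul]
        _ ≤ _ := Finset.sum_le_sum hterm
    · intro t1 _ t2 _ hne12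
      rw [Function.onFun, Finset.disjoint_left]
      intro p hp1 hp2
      simp only [Finset.mem_product, Finset.mem_singleton] at hp1 hp2
      exact hne12 (hp1.1 ▸ hp2.1 ▸ rfl)
  have hchain2 : L * (n/2) ≤ Ts.length * (12*n) := by
    have hn2 : n/2 ≤ n - n/4 := by omega
    calc L * (n/2) ≤ L * (n - n/4) := Nat.mul_le_mul_left _ hn2
      _ ≤ P.card := hPcard
      _ ≤ Q.card := hcard
      _ ≤ Ts.length * (12*n) := hQcard
  have hL48 : (L:ℝ) ≤ 48 * Ts.length := by
    have hcast : (L:ℝ) * ((n/2 : ℕ):ℝ) ≤ (Ts.length:ℝ) * (12*(n:ℝ)) := by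
      exact_mod_cast hchain2
    have hhalf : (n:ℝ)/4 ≤ ((n/2 : ℕ):ℝ) := by
      have h1 : (n:ℕ) ≤ 2*(n/2) + 1 := by omega
      have h2 : (n:ℝ) ≤ 2*((n/2:ℕ):ℝ) + 1 := by exact_mod_cast h1
      have hn1 : (2:ℝ) ≤ n := by exact_mod_cast hn
      linarith
    have hnpos : (0:ℝ) < n := by
      have : (2:ℝ) ≤ n := by exact_mod_cast hn
      linarith
    have hL0 : (0:ℝ) ≤ L := Nat.cast_nonneg L
    nlinarith [mul_le_mul_of_nonneg_left hhalf hL0]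
  have hlogb : Real.logb 2 n ≤ 2*(L:ℝ) + 2 := by
    have h1 : (n:ℕ) < 4^(L+1) := Nat.lt_pow_succ_log_self (by norm_num) n
    have h2 : (n:ℝ) < 4^(L+1) := by exact_mod_cast h1
    rw [Real.logb_le_iff_le_rpow (by norm_num) (by positivity)]
    have h3 : ((2:ℝ)) ^ (2*(L:ℝ) + 2) = 4^(L+1) := by
      rw [show (2*(L:ℝ) + 2) = ((2*L + 2 : ℕ):ℝ) by push_cast; ring, Real.rpow_natCast]
      rw [show (4:ℝ) = 2^2 by norm_num, ← pow_mul]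
      ring_nf
    rw [h3]
    linarith
  have hlen1' : (1:ℝ) ≤ Ts.length := by exact_mod_cast hlen1
  have hlogb0 : 0 ≤ Real.logb 2 n := by
    apply Real.logb_nonneg (by norm_num)
    exact_mod_cast Nat.one_le_iff_ne_zero.2 (by omega)
  linarith

end NSTC

/-- There is a constant `c > 0` such that for every `n ≥ 2`,
every non-Steiner tree cover with stretch `2` of the comb leaf metric on
`{1,…,n}` with parameter `M = n` has size at least `c·log₂ n`. -/
theorem nonSteiner_tree_cover_stretch_two_lower_bound :
    ∃ c : ℝ, 0 < c ∧
      ∀ n : ℕ, 2 ≤ n →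
      ∀ Ts : List (WeightedTree (Fin n)),
        IsNonSteinerTreeCover (combLeafD n n) 2 Ts →
        c * Real.logb 2 n ≤ (Ts.length : ℝ) := by
  exact ⟨1/200, by norm_num, fun n hn Ts hcov => NSTC.key n hn Ts hcov⟩
end

section
/- Let n ≥ 2 be an integer and ε ∈ (0,1). Let (K,d) be the uniform metric on a set K of n points, in which d(x,y) = 2 for all x ≠ y. Then every non-Steiner tree cover of (K,d) with stretch 2−ε has size at least n/2. -/
/-! Edges of a dominating tree of the uniform metric have length at least the uniform distance `δ`,
so any path with two or more edges has length at least `2δ`. A stretch below `2` therefore forces every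
pair of points to be an edge of some tree of the cover. The trees have `n - 1` edges each while all
`n.choose 2` pairs must be covered, so there are at least `n / 2` of them. -/

open scoped ENNReal

section WalkLength

variable {V : Type*} {G : SimpleGraph V} {len : V → V → ℝ≥0∞}

theorem gdist_le_len {a b : V} (h : G.Adj a b) : gdist G len a b ≤ len a b :=
  iInf_le_of_le (.cons h .nil) (by simp [walkLen])

theorem length_mul_le_walkLen {c : ℝ≥0∞} (hc : ∀ ⦃a b⦄, G.Adj a b → c ≤ len a b)
    {x y : V} (p : G.Walk x y) : p.length * c ≤ walkLen len p := by
  have := List.card_nsmul_le_sum (p.darts.map fun e => len e.toProd.1 e.toProd.2) c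
    (by simpa using fun e _ => hc e.adj)
  simpa [walkLen, SimpleGraph.Walk.length_darts] using this

theorem adj_of_gdist_lt_two_mul {c : ℝ≥0∞} (hc : ∀ ⦃a b⦄, G.Adj a b → c ≤ len a b)
    {x y : V} (hxy : x ≠ y) (h : gdist G len x y < 2 * c) : G.Adj x y := by
  obtain ⟨p, hp⟩ := iInf_lt_iff.mp h
  have hlen_ne_zero : p.length ≠ 0 := fun h0 => hxy (SimpleGraph.Walk.eq_of_length_eq_zero h0)
  have hlen_lt_two : p.length < 2 := by
    by_contra! h2
    have : 2 * c ≤ p.length * c := by gcongr; exact_mod_cast h2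
    exact (this.trans (length_mul_le_walkLen hc p)).not_gt hp
  exact SimpleGraph.Walk.adj_of_length_eq_one (p := p) (by omega)

end WalkLength

theorem WeightedTree.ofReal_le_len_of_dominating {K : Type*} {d : K → K → ℝ}
    (T : WeightedTree K) (hdom : ∀ x y, ENNReal.ofReal (d x y) ≤ T.dist x y)
    {a b : K} (h : T.graph.Adj a b) : ENNReal.ofReal (d a b) ≤ T.len a b :=
  (hdom a b).trans (gdist_le_len h)

theorem IsNonSteinerTreeCover.exists_adj_of_uniform {K : Type*} {d : K → K → ℝ} {α δ : ℝ}
    {Ts : List (WeightedTree K)} (hTs : IsNonSteinerTreeCover d α Ts) (hα : α < 2) (hδ : 0 < δ)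
    (hd : ∀ x y, x ≠ y → d x y = δ) {x y : K} (hxy : x ≠ y) : ∃ T ∈ Ts, T.graph.Adj x y := by
  obtain ⟨T, hT, hstretch⟩ := hTs.2 x y
  refine ⟨T, hT, adj_of_gdist_lt_two_mul (len := T.len) (c := ENNReal.ofReal δ) ?_ hxy ?_⟩
  · intro a b hab
    simpa [hd a b hab.ne] using T.ofReal_le_len_of_dominating (hTs.1 T hT) hab
  · calc T.dist x y ≤ ENNReal.ofReal (α * δ) := by rwa [hd x y hxy] at hstretch
      _ < ENNReal.ofReal (2 * δ) := by
        rw [ENNReal.ofReal_lt_ofReal_iff (by positivity)]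
        exact mul_lt_mul_of_pos_right hα hδ
      _ = 2 * ENNReal.ofReal δ := by simp [ENNReal.ofReal_mul]

theorem SimpleGraph.card_choose_two_le_length_mul_of_forall_adj {V : Type*} [Fintype V]
    (Gs : List (SimpleGraph V)) (htree : ∀ G ∈ Gs, G.IsTree)
    (hcov : ∀ x y, x ≠ y → ∃ G ∈ Gs, G.Adj x y) :
    (Fintype.card V).choose 2 ≤ Gs.length * (Fintype.card V - 1) := by
  classical
  have hsub : (⊤ : SimpleGraph V).edgeFinset ⊆ Gs.toFinset.biUnion (·.edgeFinset) := by
    intro e he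
    induction e using Sym2.ind with
    | _ x y =>
      obtain ⟨G, hG, hadj⟩ := hcov x y (by simpa using he)
      exact Finset.mem_biUnion.mpr ⟨G, List.mem_toFinset.mpr hG, by simpa using hadj⟩
  calc (Fintype.card V).choose 2 = (⊤ : SimpleGraph V).edgeFinset.card :=
        card_edgeFinset_top_eq_card_choose_two.symm
    _ ≤ (Gs.toFinset.biUnion (·.edgeFinset)).card := Finset.card_le_card hsub
    _ ≤ ∑ G ∈ Gs.toFinset, G.edgeFinset.card := Finset.card_biUnion_le
    _ ≤ ∑ _G ∈ Gs.toFinset, (Fintype.card V - 1) := Finset.sum_le_sum fun G hG => by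
        have := (htree G (List.mem_toFinset.mp hG)).card_edgeFinset
        omega
    _ ≤ Gs.length * (Fintype.card V - 1) := by
        rw [Finset.sum_const, smul_eq_mul]
        exact Nat.mul_le_mul_right _ (List.toFinset_card_le Gs)

theorem half_le_of_choose_two_le_mul {n L : ℕ} (hn : 2 ≤ n) (h : n.choose 2 ≤ L * (n - 1)) :
    (n : ℝ) / 2 ≤ L := by
  have hcast : (n : ℝ) * (n - 1) / 2 ≤ L * (n - 1) := by
    have := (Nat.cast_le (α := ℝ)).mpr h
    rwa [Nat.cast_choose_two, Nat.cast_mul, Nat.cast_pred (by omega)] at this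
  have hn1 : (0 : ℝ) < n - 1 := by
    have : (2 : ℝ) ≤ n := by exact_mod_cast hn
    linarith
  rw [mul_div_right_comm] at hcast
  exact le_of_mul_le_mul_right hcast hn1

/-- For `n ≥ 2` and `ε ∈ (0,1)`, every non-Steiner tree cover
with stretch `2 − ε` of the uniform metric (all pairwise distances `2`) on a set
of `n` points has size at least `n/2`. -/
theorem nonSteiner_tree_cover_stretch_below_two_lower_bound
    (n : ℕ) (hn : 2 ≤ n) (ε : ℝ) (hε : ε ∈ Set.Ioo (0 : ℝ) 1)
    (K : Type) [Fintype K] [DecidableEq K] (hcard : Fintype.card K = n)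
    (d : K → K → ℝ) (hd : ∀ x y : K, d x y = if x = y then 0 else 2)
    (Ts : List (WeightedTree K)) (hTs : IsNonSteinerTreeCover d (2 - ε) Ts) :
    (n : ℝ) / 2 ≤ (Ts.length : ℝ) := by
  have hcover : ∀ x y : K, x ≠ y → ∃ G ∈ Ts.map WeightedTree.graph, G.Adj x y := by
    intro x y hxy
    obtain ⟨T, hT, hadj⟩ := hTs.exists_adj_of_uniform (by linarith [hε.1]) two_pos
      (fun x y hxy => by simp [hd, hxy]) hxy
    exact ⟨T.graph, List.mem_map_of_mem hT, hadj⟩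
  have hcount := SimpleGraph.card_choose_two_le_length_mul_of_forall_adj (Ts.map WeightedTree.graph)
    (by simpa using fun T _ => T.isTree) hcover
  rw [List.length_map, hcard] at hcount
  exact half_le_of_choose_two_le_mul hn hcount
end

section
/- There exists a constant c > 0 such that for every real t ≥ 1 and every integer n ≥ 2, every 2-hop t-spanner H of P_n has at least c·n·log₂(n)/t edges. -/
/-- `H` (with edge weights `w`) is a 2-hop `t`-spanner of the path metric `P_n`
of the points `1,…,n` on the line: edge weights are symmetric and at least the
line distance of the endpoints, and every pair of distinct points is connected
by a path of at most two edges of total weight at most `t` times their distance. -/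
def IsTwoHopSpanner (n : ℕ) (t : ℝ) (H : SimpleGraph (Fin n))
    (w : Fin n → Fin n → ℝ) : Prop :=
  (∀ i j, w i j = w j i) ∧
  (∀ i j, H.Adj i j → |(i.val : ℝ) - (j.val : ℝ)| ≤ w i j) ∧
  (∀ i j : Fin n, i ≠ j →
    (H.Adj i j ∧ w i j ≤ t * |(i.val : ℝ) - (j.val : ℝ)|) ∨
    (∃ k, H.Adj i k ∧ H.Adj k j ∧
      w i k + w k j ≤ t * |(i.val : ℝ) - (j.val : ℝ)|))

set_option maxHeartbeats 2000000 in
/-- There is a constant `c > 0` such that for every `t ≥ 1` and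
`n ≥ 2`, every 2-hop `t`-spanner of `P_n` has at least `c·n·log₂(n)/t` edges. -/
theorem two_hop_spanner_lower_bound :
    ∃ c : ℝ, 0 < c ∧
      ∀ (t : ℝ), 1 ≤ t → ∀ (n : ℕ), 2 ≤ n →
      ∀ (H : SimpleGraph (Fin n)) (w : Fin n → Fin n → ℝ),
        IsTwoHopSpanner n t H w →
        c * n * Real.logb 2 n / t ≤ (H.edgeSet.ncard : ℝ) := by
  classical
  refine ⟨1/112, by norm_num, ?_⟩
  intro t ht n hn H w hH
  obtain ⟨hsym, hge, hpath⟩ := hH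
  have htpos : (0:ℝ) < t := by linarith
  set T : ℕ := ⌈t⌉₊ with hTdef
  have hT1 : 1 ≤ T := Nat.one_le_ceil_iff.mpr (by linarith)
  set b : ℕ := 8 * T with hbdef
  have hb2 : 2 ≤ b := by omega
  have hbt : (8:ℝ) * t ≤ (b:ℝ) := by
    have : (t:ℝ) ≤ T := Nat.le_ceil t
    push_cast [hbdef]
    linarith
  have hbt2 : (b:ℝ) ≤ 16 * t := by
    have : (T:ℝ) < t + 1 := Nat.ceil_lt_add_one (by linarith)
    push_cast [hbdef]
    linarith
  set L : ℕ := Nat.log b (n/2) + 1 with hLdef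
  have hL1 : 1 ≤ L := by omega
  have hscale : ∀ l, l < L → 2 * b ^ l ≤ n := by
    intro l hl
    have hl' : l ≤ Nat.log b (n/2) := by omega
    have h2 : b ^ l ≤ n / 2 :=
      (Nat.le_log_iff_pow_le (by omega) (by omega)).mp hl'
    omega
  have hnlt : n < 2 * b ^ L := by
    have h := Nat.lt_pow_succ_log_self (show 1 < b by omega) (n / 2)
    have h2 : n / 2 < b ^ L := by
      rw [hLdef]
      exact h
    omega
  -- key: every pair gets a "heavy" edge incident to one endpoint
  have key : ∀ x y : Fin n, x ≠ y → ∃ e ∈ H.edgeSet, (x ∈ e ∨ y ∈ e) ∧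
      ∀ a c : Fin n, e = s(a, c) →
        |(x.val:ℝ) - y.val| ≤ 2 * w a c ∧ w a c ≤ t * |(x.val:ℝ) - y.val| := by
    intro x y hxy
    rcases hpath x y hxy with ⟨hadj, hw⟩ | ⟨k, hxk, hky, hw⟩
    · refine ⟨s(x,y), H.mem_edgeSet.mpr hadj, Or.inl (Sym2.mem_mk_left x y), ?_⟩
      intro a c hac
      have h1 := hge x y hadj
      have hpos : (0:ℝ) ≤ |(x.val:ℝ) - y.val| := abs_nonneg _
      have hwac : w a c = w x y := by
        rcases Sym2.eq_iff.mp hac.symm with ⟨rfl, rfl⟩ | ⟨rfl, rfl⟩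
        · rfl
        · exact hsym a c
      rw [hwac]
      constructor <;> linarith
    · have h1 := hge x k hxk
      have h2 := hge k y hky
      have habs : |(x.val:ℝ) - y.val| ≤ |(x.val:ℝ) - k.val| + |(k.val:ℝ) - y.val| :=
        abs_sub_le _ _ _
      have ha1 : (0:ℝ) ≤ |(x.val:ℝ) - k.val| := abs_nonneg _
      have ha2 : (0:ℝ) ≤ |(k.val:ℝ) - y.val| := abs_nonneg _
      by_cases hcmp : w k y ≤ w x k
      · refine ⟨s(x,k), H.mem_edgeSet.mpr hxk, Or.inl (Sym2.mem_mk_left x k), ?_⟩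
        intro a c hac
        have hwac : w a c = w x k := by
          rcases Sym2.eq_iff.mp hac.symm with ⟨rfl, rfl⟩ | ⟨rfl, rfl⟩
          · rfl
          · exact hsym a c
        rw [hwac]
        constructor <;> linarith
      · refine ⟨s(k,y), H.mem_edgeSet.mpr hky, Or.inr (Sym2.mem_mk_right k y), ?_⟩
        intro a c hac
        have hwac : w a c = w k y := by
          rcases Sym2.eq_iff.mp hac.symm with ⟨rfl, rfl⟩ | ⟨rfl, rfl⟩
          · rfl
          · exact hsym a c
        rw [hwac]
        constructor <;> linarith
  -- a choice function over scale/position pairs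
  have hchoice : ∀ p : ℕ × ℕ, ∃ e : Sym2 (Fin n),
      p.1 < L → p.2 < n / 2 →
      e ∈ H.edgeSet ∧
      (∃ v ∈ e, (v : Fin n).val = p.2 ∨ v.val = p.2 + b ^ p.1) ∧
      ∀ a c : Fin n, e = s(a, c) →
        ((b:ℝ) ^ p.1 ≤ 2 * w a c ∧ w a c ≤ t * (b:ℝ) ^ p.1) := by
    rintro ⟨l, i⟩
    by_cases hli : l < L ∧ i < n / 2
    · obtain ⟨hl, hi⟩ := hli
      have hsc := hscale l hl
      have hiy : i + b ^ l < n := by omega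
      have hix : i < n := by omega
      have hblpos : 0 < b ^ l := Nat.pow_pos (by omega)
      set x : Fin n := ⟨i, hix⟩ with hx
      set y : Fin n := ⟨i + b ^ l, hiy⟩ with hy
      have hxy : x ≠ y := by
        simp only [hx, hy, Ne, Fin.mk.injEq]
        omega
      obtain ⟨e, he, hinc, hprop⟩ := key x y hxy
      have habs : |(x.val:ℝ) - y.val| = (b:ℝ) ^ l := by
        simp only [hx, hy]
        rw [abs_sub_comm]
        rw [abs_of_nonneg]
        · push_cast; ring
        · push_cast; linarith [pow_nonneg (by positivity : (0:ℝ) ≤ (b:ℝ)) l]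
      refine ⟨e, fun _ _ => ⟨he, ?_, fun a c hac => by
        have := hprop a c hac
        rw [habs] at this
        exact this⟩⟩
      rcases hinc with h | h
      · exact ⟨x, h, Or.inl rfl⟩
      · exact ⟨y, h, Or.inr rfl⟩
    · exact ⟨s(⟨0, by omega⟩, ⟨0, by omega⟩), fun h1 h2 => absurd ⟨h1, h2⟩ hli⟩
  choose f hf using hchoice
  set s : Finset (ℕ × ℕ) := Finset.range L ×ˢ Finset.range (n / 2) with hsdef
  have hmem : ∀ p ∈ s, p.1 < L ∧ p.2 < n/2 := by
    intro p hp
    rw [hsdef, Finset.mem_product, Finset.mem_range, Finset.mem_range] at hp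
    exact hp
  have himg : s.image f ⊆ H.edgeFinset := by
    intro e he
    obtain ⟨p, hp, rfl⟩ := Finset.mem_image.mp he
    obtain ⟨h1, h2⟩ := hmem p hp
    exact SimpleGraph.mem_edgeFinset.mpr (hf p h1 h2).1
  have hfiber : ∀ e ∈ s.image f, (s.filter (fun p => f p = e)).card ≤ 4 := by
    intro e he
    induction e using Sym2.ind with
    | _ a c =>
      obtain ⟨p₀, hp₀, hfp₀⟩ := Finset.mem_image.mp he
      have hp₀f : p₀ ∈ s.filter (fun p => f p = s(a,c)) :=
        Finset.mem_filter.mpr ⟨hp₀, hfp₀⟩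
      have hW : ∀ p ∈ s.filter (fun p => f p = s(a,c)),
          ((b:ℝ) ^ p.1 ≤ 2 * w a c ∧ w a c ≤ t * (b:ℝ) ^ p.1) := by
        intro p hp
        obtain ⟨hps, hpe⟩ := Finset.mem_filter.mp hp
        obtain ⟨h1, h2⟩ := hmem p hps
        exact (hf p h1 h2).2.2 a c hpe
      have hnot : ∀ p ∈ s.filter (fun p => f p = s(a,c)),
          ∀ q ∈ s.filter (fun p => f p = s(a,c)), ¬ p.1 < q.1 := by
        intro p hp q hq hlt
        obtain ⟨hp1, hp2⟩ := hW p hp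
        obtain ⟨hq1, hq2⟩ := hW q hq
        have hb1 : (1:ℝ) ≤ (b:ℝ) := by
          have : (1:ℕ) ≤ b := by omega
          exact_mod_cast this
        have hbge : (b:ℝ)^(p.1+1) ≤ (b:ℝ)^q.1 :=
          pow_le_pow_right₀ hb1 hlt
        have hpow : (0:ℝ) < (b:ℝ)^p.1 := pow_pos (by linarith) _
        have h8 : (8:ℝ) * t * (b:ℝ)^p.1 ≤ (b:ℝ)^(p.1+1) := by
          rw [pow_succ]
          nlinarith
        nlinarith
      have hsame : ∀ p ∈ s.filter (fun p => f p = s(a,c)), p.1 = p₀.1 := by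
        intro p hp
        have h1 := hnot p hp p₀ hp₀f
        have h2 := hnot p₀ hp₀f p hp
        omega
      have hsub : s.filter (fun p => f p = s(a,c)) ⊆
          ({p₀.1} ×ˢ ({a.val, c.val, a.val - b ^ p₀.1, c.val - b ^ p₀.1} : Finset ℕ)) := by
        intro p hp
        have hp1 : p.1 = p₀.1 := hsame p hp
        obtain ⟨hps, hpe⟩ := Finset.mem_filter.mp hp
        obtain ⟨h1, h2⟩ := hmem p hps
        obtain ⟨v, hv, hvv⟩ := (hf p h1 h2).2.1
        rw [hpe] at hv
        have hvac : v = a ∨ v = c := Sym2.mem_iff.mp hv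
        have hblpos : 0 < b ^ p.1 := Nat.pow_pos (by omega)
        rw [Finset.mem_product, Finset.mem_singleton]
        refine ⟨hp1, ?_⟩
        simp only [Finset.mem_insert, Finset.mem_singleton]
        rw [← hp1]
        rcases hvac with rfl | rfl <;> rcases hvv with h | h <;> omega
      have h4 : ({a.val, c.val, a.val - b ^ p₀.1, c.val - b ^ p₀.1} : Finset ℕ).card ≤ 4 := by
        have i1 := Finset.card_insert_le a.val
          ({c.val, a.val - b ^ p₀.1, c.val - b ^ p₀.1} : Finset ℕ)
        have i2 := Finset.card_insert_le c.val
          ({a.val - b ^ p₀.1, c.val - b ^ p₀.1} : Finset ℕ)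
        have i3 := Finset.card_insert_le (a.val - b ^ p₀.1)
          ({c.val - b ^ p₀.1} : Finset ℕ)
        simp only [Finset.card_singleton] at i1 i2 i3
        omega
      calc (s.filter (fun p => f p = s(a,c))).card
          ≤ (({p₀.1} : Finset ℕ) ×ˢ ({a.val, c.val, a.val - b ^ p₀.1, c.val - b ^ p₀.1} : Finset ℕ)).card :=
            Finset.card_le_card hsub
        _ = 1 * ({a.val, c.val, a.val - b ^ p₀.1, c.val - b ^ p₀.1} : Finset ℕ).card := by
            rw [Finset.card_product, Finset.card_singleton]
        _ ≤ 4 := by omega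
  have hcount : s.card ≤ 4 * (s.image f).card :=
    Finset.card_le_mul_card_image s 4 hfiber
  have hmcard : (s.image f).card ≤ H.edgeFinset.card := Finset.card_le_card himg
  have hscard : s.card = L * (n / 2) := by
    rw [hsdef, Finset.card_product, Finset.card_range, Finset.card_range]
  have hedge : (H.edgeSet.ncard : ℝ) = (H.edgeFinset.card : ℝ) := by
    rw [← SimpleGraph.coe_edgeFinset, Set.ncard_coe_finset]
  set m : ℕ := H.edgeFinset.card with hmdef
  have hnat : L * (n / 2) ≤ 4 * m := by
    calc L * (n / 2) = s.card := hscard.symm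
      _ ≤ 4 * (s.image f).card := hcount
      _ ≤ 4 * m := by omega
  -- real arithmetic
  have hLm : (L : ℝ) * ((n/2 : ℕ) : ℝ) ≤ 4 * (m:ℝ) := by exact_mod_cast hnat
  have hN2 : (n:ℝ)/4 ≤ ((n/2 : ℕ):ℝ) := by
    have h1 : n ≤ 2 * (n/2) + 1 := by omega
    have h2 : 1 ≤ n / 2 := by omega
    have h1' : (n:ℝ) ≤ 2 * ((n/2:ℕ):ℝ) + 1 := by exact_mod_cast h1
    have h2' : (1:ℝ) ≤ ((n/2:ℕ):ℝ) := by exact_mod_cast h2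
    linarith
  -- logarithm bound
  have hlogt : Real.logb 2 t ≤ 2 * t := by
    have hlog2 : (0.6931471803:ℝ) < Real.log 2 := Real.log_two_gt_d9
    have h1 : Real.log t ≤ t - 1 := Real.log_le_sub_one_of_pos htpos
    have h0 : 0 ≤ Real.log t := Real.log_nonneg ht
    rw [Real.logb, div_le_iff₀ (by linarith)]
    nlinarith
  have hlogb_b : Real.logb 2 (b:ℝ) ≤ 6 * t := by
    have h1 : Real.logb 2 (b:ℝ) ≤ Real.logb 2 (16 * t) := by
      apply Real.logb_le_logb_of_le (by norm_num) ?_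
      · exact hbt2
      · positivity
    have h16 : Real.logb 2 (16 * t) = 4 + Real.logb 2 t := by
      rw [Real.logb_mul (by norm_num) (by linarith)]
      have : (16:ℝ) = 2 ^ (4:ℕ) := by norm_num
      rw [this, Real.logb_pow, Real.logb_self_eq_one (by norm_num)]
      norm_num
    linarith
  have hlogn : Real.logb 2 n ≤ 7 * t * L := by
    have hn2 : (n:ℝ) ≤ 2 * (b:ℝ) ^ L := by
      have : (n:ℝ) < 2 * ((b^L : ℕ):ℝ) := by exact_mod_cast hnlt
      push_cast at this
      linarith
    have hbLpos : (0:ℝ) < (b:ℝ) ^ L := pow_pos (by positivity) _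
    have h1 : Real.logb 2 n ≤ Real.logb 2 (2 * (b:ℝ)^L) := by
      apply Real.logb_le_logb_of_le (by norm_num) ?_ hn2
      positivity
    have h2 : Real.logb 2 (2 * (b:ℝ)^L) = 1 + L * Real.logb 2 (b:ℝ) := by
      rw [Real.logb_mul (by norm_num) (by positivity), Real.logb_pow,
        Real.logb_self_eq_one (by norm_num)]
    have hL1' : (1:ℝ) ≤ L := by exact_mod_cast hL1
    have hlb0 : (0:ℝ) ≤ (L:ℝ) := by positivity
    have h3 : (L:ℝ) * Real.logb 2 (b:ℝ) ≤ (L:ℝ) * (6 * t) :=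
      mul_le_mul_of_nonneg_left hlogb_b hlb0
    have h4 : (1:ℝ) ≤ t * L := by nlinarith
    nlinarith
  -- conclude
  rw [hedge]
  have hA0 : 0 ≤ Real.logb 2 n := Real.logb_nonneg (by norm_num) (by
    have : (1:ℕ) ≤ n := by omega
    exact_mod_cast this)
  have hL' : Real.logb 2 n / (7*t) ≤ (L:ℝ) := by
    rw [div_le_iff₀ (by positivity)]
    calc Real.logb 2 n ≤ 7 * t * L := hlogn
      _ = L * (7 * t) := by ring
  have hL0 : (0:ℝ) ≤ L := by positivity
  have hmul : Real.logb 2 n / (7*t) * ((n:ℝ)/4) ≤ (L:ℝ) * ((n/2 : ℕ):ℝ) := by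
    apply mul_le_mul hL' hN2 (by positivity) hL0
  have hfin : Real.logb 2 n / (7*t) * ((n:ℝ)/4) ≤ 4 * (m:ℝ) := le_trans hmul hLm
  have heq : (1/112 : ℝ) * n * Real.logb 2 n / t = Real.logb 2 n / (7*t) * ((n:ℝ)/4) / 4 := by
    field_simp
    ring
  rw [heq]
  linarith
end

section
/- Let (X,d) be a finite metric space in which any two distinct points are at distance at least 1, and let ε ∈ (0,1/4). Suppose X = N_0 ⊇ N_1 ⊇ N_2 ⊇ ⋯ is a nested sequence of subsets such that N_i is a 2^i-net of X for every i ≥ 0. Define a simple graph H on X by joining x and y (x ≠ y) whenever d(x,y) ≤ 18/ε, or there exists an integer i ≥ 1 with x,y ∈ N_i and 8·2^i/ε ≤ d(x,y) ≤ 19·2^i/ε. Then, with each edge {x,y} of length d(x,y), H is a (1+ε)-spanner of (X,d): d_H(x,y) ≤ (1+ε)·d(x,y) for all x,y ∈ X. -/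
open scoped ENNReal

lemma gdist_self_le {V : Type*} (G : SimpleGraph V) (len : V → V → ℝ≥0∞) (x : V) :
    gdist G len x x = 0 := by
  refine le_antisymm (iInf_le_of_le SimpleGraph.Walk.nil ?_) (zero_le)
  simp [walkLen]

lemma gdist_le_adj {V : Type*} {G : SimpleGraph V} (len : V → V → ℝ≥0∞) {x y : V}
    (h : G.Adj x y) : gdist G len x y ≤ len x y := by
  refine iInf_le_of_le (SimpleGraph.Walk.cons h SimpleGraph.Walk.nil) ?_
  simp [walkLen]

lemma gdist_triangle {V : Type*} (G : SimpleGraph V) (len : V → V → ℝ≥0∞) (x y z : V) :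
    gdist G len x z ≤ gdist G len x y + gdist G len y z := by
  simp only [gdist]
  rw [ENNReal.iInf_add]
  refine le_iInf fun p => ?_
  rw [ENNReal.add_iInf]
  
  refine le_iInf fun q => ?_
  refine iInf_le_of_le (p.append q) (le_of_eq ?_)
  simp [walkLen, SimpleGraph.Walk.darts_append]

/-- Let `(X,d)` be a finite metric space with minimum distance at
least `1`, `ε ∈ (0,1/4)`, and `X = N 0 ⊇ N 1 ⊇ ⋯` a nested sequence where `N i`
is a `2^i`-net of `X`. The graph `H` joining `x ≠ y` whenever `d(x,y) ≤ 18/ε`,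
or `x,y ∈ N i` with `8·2^i/ε ≤ d(x,y) ≤ 19·2^i/ε` for some `i ≥ 1`, with each
edge `{x,y}` of length `d(x,y)`, is a `(1+ε)`-spanner of `(X,d)`. -/
theorem net_tree_spanner (X : Type) [MetricSpace X] [Fintype X]
    (hsep : ∀ x y : X, x ≠ y → 1 ≤ dist x y)
    (ε : ℝ) (hε : ε ∈ Set.Ioo (0 : ℝ) (1 / 4))
    (N : ℕ → Set X) (hN0 : N 0 = Set.univ) (hnested : ∀ i, N (i + 1) ⊆ N i)
    (hnet_cover : ∀ i, ∀ x : X, ∃ y ∈ N i, dist x y ≤ (2 : ℝ) ^ i)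
    (hnet_sep : ∀ i, ∀ y ∈ N i, ∀ z ∈ N i, y ≠ z → (2 : ℝ) ^ i ≤ dist y z)
    (H : SimpleGraph X)
    (hH : ∀ x y : X, H.Adj x y ↔ x ≠ y ∧
      (dist x y ≤ 18 / ε ∨
        ∃ i : ℕ, 1 ≤ i ∧ x ∈ N i ∧ y ∈ N i ∧
          8 * 2 ^ i / ε ≤ dist x y ∧ dist x y ≤ 19 * 2 ^ i / ε)) :
    ∀ x y : X, gdist H (fun a b => ENNReal.ofReal (dist a b)) x y ≤
      ENNReal.ofReal ((1 + ε) * dist x y) := by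
  classical
  obtain ⟨hε0, hε4⟩ := hε
  suffices h : ∀ n : ℕ, ∀ x y : X, ⌈dist x y⌉₊ ≤ n →
      gdist H (fun a b => ENNReal.ofReal (dist a b)) x y ≤
        ENNReal.ofReal ((1 + ε) * dist x y) by
    intro x y; exact h _ x y le_rfl
  intro n
  induction n using Nat.strong_induction_on with
  | _ n IH =>
    intro x y hn
    by_cases hxy : x = y
    · subst hxy
      rw [gdist_self_le]
      exact zero_le
    have hd1 : 1 ≤ dist x y := hsep x y hxy
    have hd0 : (0 : ℝ) < dist x y := by linarith
    by_cases hsmall : dist x y ≤ 18 / ε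
    · have hadj : H.Adj x y := (hH x y).2 ⟨hxy, Or.inl hsmall⟩
      refine le_trans (gdist_le_adj _ hadj) ?_
      apply ENNReal.ofReal_le_ofReal
      nlinarith
    push_neg at hsmall
    have hεd : 18 < ε * dist x y := by
      rw [div_lt_iff₀ hε0] at hsmall; linarith
    have hex : ∃ k : ℕ, ε * dist x y < 9 * 2 ^ (k + 1) := by
      obtain ⟨k, hk⟩ := pow_unbounded_of_one_lt (ε * dist x y) (by norm_num : (1:ℝ) < 2)
      refine ⟨k, ?_⟩
      have h2 : (9:ℝ) * 2 ^ (k + 1) = 18 * 2 ^ k := by ring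
      nlinarith [pow_pos (by norm_num : (0:ℝ) < 2) k]
    set i := Nat.find hex with hi_def
    have hhigh : ε * dist x y < 18 * 2 ^ i := by
      have := Nat.find_spec hex
      rw [← hi_def] at this
      calc ε * dist x y < 9 * 2 ^ (i + 1) := this
        _ = 18 * 2 ^ i := by ring
    have hi1 : 1 ≤ i := by
      by_contra hc
      push_neg at hc
      interval_cases i
      · simp at hhigh; linarith
    have hlow : 9 * 2 ^ i ≤ ε * dist x y := by
      have hmin := Nat.find_min hex (show i - 1 < i by omega)
      push_neg at hmin
      have : i - 1 + 1 = i := by omega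
      rwa [this] at hmin
    set t : ℝ := 2 ^ i with ht_def
    have ht0 : (0 : ℝ) < t := pow_pos (by norm_num) i
    -- key consequences
    have htd : 36 * t ≤ dist x y := by nlinarith
    have hd72 : 72 < dist x y := by nlinarith
    obtain ⟨x', hx'N, hx'd⟩ := hnet_cover i x
    obtain ⟨y', hy'N, hy'd⟩ := hnet_cover i y
    have hup : dist x' y' ≤ dist x y + 2 * t := by
      have h4 := dist_triangle4 x' x y y'
      have := dist_comm x' x
      linarith [hx'd, hy'd, dist_comm x' x ▸ le_refl (dist x' x)]
    have hup' : dist x' y' ≤ dist x y + 2 * t := hup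
    have hlo : dist x y - 2 * t ≤ dist x' y' := by
      have h4 := dist_triangle4 x x' y' y
      have h1 : dist x x' ≤ t := hx'd
      have h2 : dist y' y ≤ t := by rw [dist_comm]; exact hy'd
      linarith
    have hne : x' ≠ y' := by
      intro hcontr
      rw [hcontr] at hlo
      simp at hlo
      linarith
    have hadjlo : 8 * 2 ^ i / ε ≤ dist x' y' := by
      rw [div_le_iff₀ hε0]
      nlinarith
    have hadjhi : dist x' y' ≤ 19 * 2 ^ i / ε := by
      rw [le_div_iff₀ hε0]
      nlinarith
    have hadj : H.Adj x' y' :=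
      (hH x' y').2 ⟨hne, Or.inr ⟨i, hi1, hx'N, hy'N, hadjlo, hadjhi⟩⟩
    -- induction hypotheses for the short legs
    have hnR : (dist x y : ℝ) ≤ n := le_trans (Nat.le_ceil _) (Nat.cast_le.2 hn)
    have hsmall_leg : ∀ a b : X, dist a b ≤ t →
        gdist H (fun a b => ENNReal.ofReal (dist a b)) a b ≤
          ENNReal.ofReal ((1 + ε) * dist a b) := by
      intro a b hab
      have hceil : (⌈dist a b⌉₊ : ℝ) < n := by
        have := Nat.ceil_lt_add_one (dist_nonneg (x := a) (y := b))
        linarith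
      exact IH ⌈dist a b⌉₊ (Nat.cast_lt.1 (lt_of_lt_of_le hceil (by exact_mod_cast le_refl (n:ℝ)))) a b le_rfl
    have hIH1 := hsmall_leg x x' hx'd
    have hIH2 := hsmall_leg y' y (by rw [dist_comm]; exact hy'd)
    -- assemble
    have htri : gdist H (fun a b => ENNReal.ofReal (dist a b)) x y ≤
        gdist H (fun a b => ENNReal.ofReal (dist a b)) x x' +
        gdist H (fun a b => ENNReal.ofReal (dist a b)) x' y' +
        gdist H (fun a b => ENNReal.ofReal (dist a b)) y' y := by
      calc gdist H _ x y ≤ gdist H _ x x' + gdist H _ x' y := gdist_triangle _ _ _ _ _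
        _ ≤ gdist H _ x x' + (gdist H _ x' y' + gdist H _ y' y) := by
            exact add_le_add_right (gdist_triangle _ _ _ _ _) _
        _ = _ := by ring
    have hedge : gdist H (fun a b => ENNReal.ofReal (dist a b)) x' y' ≤
        ENNReal.ofReal (dist x' y') := gdist_le_adj _ hadj
    refine le_trans htri ?_
    refine le_trans (add_le_add (add_le_add hIH1 hedge) hIH2) ?_
    rw [← ENNReal.ofReal_add (by positivity) (by positivity),
        ← ENNReal.ofReal_add (by positivity) (by positivity)]
    apply ENNReal.ofReal_le_ofReal
    have h1 : dist x x' ≤ t := hx'd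
    have h2 : dist y' y ≤ t := by rw [dist_comm]; exact hy'd
    nlinarith [dist_nonneg (x := x) (y := x'), dist_nonneg (x := y') (y := y)]
end
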